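/- arXiv:1810.02437 — 9 statements merged into one kernel-verified Lean document; each statement's English description precedes it below -/
import Mathlib

section
/- For any recurrent configuration c on a connected graph G = (V,E) with sink s, the level of c, defined as level(c) = Σ_i c_i − |E|, satisfies 0 ≤ level(c) ≤ |E| − |V| + 1. -/
open Finset
open scoped Classical

noncomputable def topple {n : ℕ} (G : SimpleGraph (Fin n)) (c : Fin n → ℕ) (i : Fin n) :
    Fin n → ℕ :=
  fun j => if j = i then c j - G.degree i else c j + (if G.Adj i j then 1 else 0)

noncomputable def toppleList {n : ℕ} (G : SimpleGraph (Fin n)) (c : Fin n → ℕ) :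
    List (Fin n) → (Fin n → ℕ)
  | [] => c
  | i :: l => toppleList G (topple G c i) l

def ValidTopplings {n : ℕ} (G : SimpleGraph (Fin n)) (c : Fin n → ℕ) :
    List (Fin n) → Prop
  | [] => True
  | i :: l => G.degree i ≤ c i ∧ ValidTopplings G (topple G c i) l

/-- `c` is a recurrent configuration on `G` with sink `s`. -/
def IsRecurrent {n : ℕ} (G : SimpleGraph (Fin n)) (s : Fin n) (c : Fin n → ℕ) : Prop :=
  c s = G.degree s ∧ (∀ i, i ≠ s → c i < G.degree i) ∧
    ∃ l : List (Fin n), l.head? = some s ∧ l.Nodup ∧ (∀ v, v ∈ l) ∧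
      ValidTopplings G c l ∧ toppleList G c l = c

/-- The level of a configuration: total number of grains minus the number of edges. -/
noncomputable def level {n : ℕ} (G : SimpleGraph (Fin n)) (c : Fin n → ℕ) : ℤ :=
  (∑ i, (c i : ℤ)) - (G.edgeFinset.card : ℤ)

/-- Indicator sum: number of elements of `l` adjacent to `i`. -/
noncomputable def nbrCount {n : ℕ} (G : SimpleGraph (Fin n)) (i : Fin n)
    (l : List (Fin n)) : ℕ :=
  (l.map (fun v => if G.Adj i v then 1 else 0)).sum

/-- Number of ordered adjacent pairs (earlier, later) in `l`. -/
noncomputable def listS {n : ℕ} (G : SimpleGraph (Fin n)) : List (Fin n) → ℕ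
  | [] => 0
  | i :: l => nbrCount G i l + listS G l

lemma topple_map_sum {n : ℕ} (G : SimpleGraph (Fin n)) (c : Fin n → ℕ) (i : Fin n)
    (l : List (Fin n)) (hi : i ∉ l) :
    (l.map (topple G c i)).sum = (l.map c).sum + nbrCount G i l := by
  induction l with
  | nil => simp [nbrCount]
  | cons a l ih =>
    simp only [List.mem_cons, not_or] at hi
    have ha : a ≠ i := fun h => hi.1 h.symm
    simp only [List.map_cons, List.sum_cons, nbrCount, ih hi.2, topple, if_neg ha]
    ring

lemma valid_sum_le {n : ℕ} (G : SimpleGraph (Fin n)) :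
    ∀ (l : List (Fin n)) (c : Fin n → ℕ), ValidTopplings G c l → l.Nodup →
      (l.map (fun v => G.degree v)).sum ≤ (l.map c).sum + listS G l := by
  intro l
  induction l with
  | nil => intro c _ _; simp [listS]
  | cons i l ih =>
    intro c hv hnd
    obtain ⟨hdeg, hv'⟩ := hv
    have hnd' := hnd.of_cons
    have hi : i ∉ l := (List.nodup_cons.mp hnd).1
    have := ih (topple G c i) hv' hnd'
    rw [topple_map_sum G c i l hi] at this
    simp only [List.map_cons, List.sum_cons, listS]
    omega

lemma nbrCount_symm {n : ℕ} (G : SimpleGraph (Fin n)) (i : Fin n) (l : List (Fin n)) :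
    (l.map (fun v => if G.Adj v i then 1 else 0)).sum = nbrCount G i l := by
  unfold nbrCount
  congr 1
  apply List.map_congr_left
  intro a _
  simp [G.adj_comm]

lemma two_listS {n : ℕ} (G : SimpleGraph (Fin n)) :
    ∀ (l : List (Fin n)), l.Nodup →
      2 * listS G l = (l.map (fun v => nbrCount G v l)).sum := by
  intro l
  induction l with
  | nil => simp [listS]
  | cons i l ih =>
    intro hnd
    have hnd' := hnd.of_cons
    have key : (l.map (fun v => nbrCount G v (i :: l))).sum
        = (l.map (fun v => if G.Adj v i then 1 else 0)).sum
          + (l.map (fun v => nbrCount G v l)).sum := by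
      rw [← List.sum_map_add]
      apply congrArg List.sum
      apply List.map_congr_left
      intro a _
      simp [nbrCount]
    simp only [List.map_cons, List.sum_cons, listS, two_mul]
    rw [key, nbrCount_symm, ← ih hnd']
    have : nbrCount G i (i :: l) = nbrCount G i l := by
      simp [nbrCount]
    rw [this]
    ring

lemma list_sum_eq_univ_sum {n : ℕ} (f : Fin n → ℕ) (l : List (Fin n))
    (hnd : l.Nodup) (hall : ∀ v, v ∈ l) :
    (l.map f).sum = ∑ v, f v := by
  have huniv : l.toFinset = Finset.univ := Finset.eq_univ_iff_forall.mpr (by simp [hall])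
  rw [← List.sum_toFinset f hnd, huniv]

lemma nbrCount_full {n : ℕ} (G : SimpleGraph (Fin n)) (v : Fin n) (l : List (Fin n))
    (hnd : l.Nodup) (hall : ∀ u, u ∈ l) :
    nbrCount G v l = G.degree v := by
  rw [nbrCount, list_sum_eq_univ_sum _ l hnd hall]
  rw [SimpleGraph.degree, SimpleGraph.neighborFinset_eq_filter, Finset.card_filter]

/-- for a recurrent configuration `c` on a connected graph `G` with sink
`s`, we have `0 ≤ level c ≤ |E| - |V| + 1`. -/
theorem level_bounds {n : ℕ} (G : SimpleGraph (Fin n)) (hG : G.Connected)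
    (s : Fin n) (c : Fin n → ℕ) (hc : IsRecurrent G s c) :
    0 ≤ level G c ∧ level G c ≤ (G.edgeFinset.card : ℤ) - n + 1 := by
  obtain ⟨hs, hlt, l, hhead, hnd, hall, hvalid, -⟩ := hc
  have hdegsum : ∑ v, G.degree v = 2 * G.edgeFinset.card :=
    G.sum_degrees_eq_twice_card_edges
  -- listS l = number of edges
  have h2S : 2 * listS G l = 2 * G.edgeFinset.card := by
    rw [two_listS G l hnd, list_sum_eq_univ_sum _ l hnd hall, ← hdegsum]
    exact Finset.sum_congr rfl fun v _ => nbrCount_full G v l hnd hall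
  have hS : listS G l = G.edgeFinset.card := by omega
  -- lower bound
  have hlow : G.edgeFinset.card ≤ ∑ v, c v := by
    have h1 := valid_sum_le G l c hvalid hnd
    rw [list_sum_eq_univ_sum _ l hnd hall, list_sum_eq_univ_sum _ l hnd hall,
      hdegsum, hS] at h1
    omega
  -- upper bound
  have hn : 0 < n := Fin.pos s
  have hup : ∑ v, c v + (n - 1) ≤ 2 * G.edgeFinset.card := by
    have : ∑ v, (c v + if v = s then 0 else 1) ≤ ∑ v, G.degree v := by
      apply Finset.sum_le_sum
      intro v _
      by_cases hv : v = s
      · subst hv; simp [hs]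
      · have := hlt v hv; simp [hv]; omega
    rw [Finset.sum_add_distrib] at this
    have hcard : ∑ v : Fin n, (if v = s then 0 else 1) = n - 1 := by
      have h1 : ∑ v : Fin n, (if v = s then 0 else 1)
          = (Finset.univ.filter (fun v => ¬ v = s)).card := by
        rw [Finset.card_filter]
        apply Finset.sum_congr rfl
        intro v _
        by_cases hv : v = s <;> simp [hv]
      rw [h1]
      have h2 : (Finset.univ.filter (fun v => ¬ v = s)) = Finset.univ.erase s := by
        ext v; simp [Finset.mem_erase, and_comm]
      rw [h2, Finset.card_erase_of_mem (Finset.mem_univ s)]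
      simp
    rw [hcard, hdegsum] at this
    exact this
  constructor
  · simp only [level, sub_nonneg]
    push_cast
    exact_mod_cast Nat.cast_le.mpr hlow
  · simp only [level]
    have h3 : (∑ v, (c v : ℤ)) = ((∑ v, c v : ℕ) : ℤ) := by push_cast; rfl
    rw [h3]
    have h4 : ((∑ v, c v : ℕ) : ℤ) + (n : ℤ) - 1 ≤ 2 * (G.edgeFinset.card : ℤ) := by
      have := hup
      have hn' : (1 : ℕ) ≤ n := hn
      push_cast
      omega
    linarith
end

section
/- Let π be an indecomposable permutation, G = G_π with sink s, and T a spanning tree of G rooted at s. Define for each vertex i: λ_i = |N_G(i) ∩ T^{(>h(i))}|, μ_i = |N_G(i) ∩ T^{(h(i))}|, ν_i = |N_G(i) ∩ T^{(h(i)−1)} ∩ [0, p(i)−1]|, and c_i(T) = λ_i + μ_i + ν_i. Then the configuration c(T) is recurrent on (G, s). -/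
open Finset
open scoped Classical

def permGraph {n : ℕ} (π : Equiv.Perm (Fin n)) : SimpleGraph (Fin n) :=
  SimpleGraph.fromRel (fun i j => i < j ∧ π.symm j < π.symm i)

def IsIndecomposable {n : ℕ} (π : Equiv.Perm (Fin n)) : Prop :=
  ∀ k : ℕ, 0 < k → k < n → ¬ (∀ i : Fin n, (i : ℕ) < k → ((π i : ℕ) < k))

/-- `λ i`: number of neighbors of `i` in `G` whose height in `T` (distance to the
root `s`) is strictly greater than that of `i`. -/
noncomputable def lamStat {n : ℕ} (G T : SimpleGraph (Fin n)) (s i : Fin n) : ℕ :=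
  (Finset.univ.filter fun j => G.Adj i j ∧ T.dist s i < T.dist s j).card

/-- `μ i`: number of neighbors of `i` in `G` at the same height in `T` as `i`. -/
noncomputable def muStat {n : ℕ} (G T : SimpleGraph (Fin n)) (s i : Fin n) : ℕ :=
  (Finset.univ.filter fun j => G.Adj i j ∧ T.dist s j = T.dist s i).card

/-- `ν i`: number of neighbors `j` of `i` in `G` at height `h(i) - 1` in `T` with
`j < p(i)`, where `p(i)` is the parent of `i` in `T` rooted at `s` (characterized as
the unique `T`-neighbor `q` of `i` at height `h(i) - 1`). -/
noncomputable def nuStat {n : ℕ} (G T : SimpleGraph (Fin n)) (s i : Fin n) : ℕ :=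
  (Finset.univ.filter fun j => G.Adj i j ∧ T.dist s j + 1 = T.dist s i ∧
    ∃ q : Fin n, T.Adj i q ∧ T.dist s q + 1 = T.dist s i ∧ j < q).card

/-- The configuration associated with a spanning tree `T` of `G` rooted at `s`. -/
noncomputable def treeConfig {n : ℕ} (G T : SimpleGraph (Fin n)) (s : Fin n) :
    Fin n → ℕ :=
  fun i => lamStat G T s i + muStat G T s i + nuStat G T s i

/-! Topple the vertices in order of increasing height in `T`, starting with the sink. When `i`
topples, each of its `G`-neighbours of smaller height has already toppled and sent it one chip, so
`i` holds at least `λ_i + μ_i + #{lower neighbours} = deg i` chips. Once every vertex has toppled,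
each has lost its degree and received one chip per neighbour, so the configuration is back to
`c(T)`. Off the sink, the parent `p(i)` is a lower neighbour that `ν_i` does not count, so
`c_i < deg i`. -/

open SimpleGraph

variable {n : ℕ}

lemma List.exists_pairwise_nodup_forall_mem {α β : Type*} [Fintype α] [LinearOrder β]
    (r : α → β) : ∃ l : List α, l.Pairwise (r · ≤ r ·) ∧ l.Nodup ∧ ∀ x, x ∈ l := by
  classical
  let l := Finset.univ.toList.mergeSort (fun a b => decide (r a ≤ r b))
  have hperm : l.Perm Finset.univ.toList := List.mergeSort_perm _ _
  refine ⟨l, ?_, hperm.nodup_iff.mpr (Finset.nodup_toList _), fun x => hperm.mem_iff.mpr (by simp)⟩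
  simpa using List.pairwise_mergeSort (le := fun a b => decide (r a ≤ r b))
    (fun _ _ _ hab hbc => by simpa using (of_decide_eq_true hab).trans (of_decide_eq_true hbc))
    (fun a b => by simpa using le_total (r a) (r b)) Finset.univ.toList

lemma List.head?_eq_of_pairwise_le {α β : Type*} [Preorder β] {r : α → β} {l : List α} {a : α}
    (hl : l.Pairwise (r · ≤ r ·)) (ha : a ∈ l) (hmin : ∀ x ≠ a, r a < r x) :
    l.head? = some a := by
  cases l with
  | nil => simp at ha
  | cons x l =>
    rw [List.head?_cons, Option.some.injEq]
    by_contra hxa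
    have hal : a ∈ l := (List.mem_cons.mp ha).resolve_left (Ne.symm hxa)
    exact ((List.pairwise_cons.mp hl).1 a hal).not_gt (hmin x hxa)

lemma SimpleGraph.Connected.exists_adj_dist_add_one_eq {V : Type*} {H : SimpleGraph V}
    (hH : H.Connected) {s i : V} (hi : i ≠ s) :
    ∃ q, H.Adj i q ∧ H.dist s q + 1 = H.dist s i := by
  obtain ⟨p, hp⟩ := hH.exists_walk_length_eq_dist i s
  cases p with
  | nil => exact absurd rfl hi
  | @cons _ q _ hiq p =>
    refine ⟨q, hiq, le_antisymm ?_ ?_⟩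
    · rw [dist_comm (v := i), ← hp, Walk.length_cons, dist_comm]
      exact Nat.add_le_add_right (dist_le p) 1
    · simpa [dist_eq_one_iff_adj.mpr hiq.symm] using hiq.symm.reachable.dist_triangle_right s

section Toppling

variable (G : SimpleGraph (Fin n))

noncomputable def degreeIn (S : Finset (Fin n)) (i : Fin n) : ℕ :=
  #{j ∈ S | G.Adj i j}

/-- The configuration reached from `c` by toppling each vertex of `S` once; the truncated
subtraction is faithful only when some ordering of `S` is a legal toppling sequence. -/
noncomputable def toppledConfig (c : Fin n → ℕ) (S : Finset (Fin n)) : Fin n → ℕ :=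
  fun i => c i + degreeIn G S i - if i ∈ S then G.degree i else 0

variable {G}

lemma degreeIn_insert {S : Finset (Fin n)} {i : Fin n} (hi : i ∉ S) (j : Fin n) :
    degreeIn G (insert i S) j = degreeIn G S j + if G.Adj j i then 1 else 0 := by
  unfold degreeIn
  rw [filter_insert]
  split_ifs
  · exact card_insert_of_notMem fun h => hi (mem_of_mem_filter i h)
  · rfl

lemma degreeIn_univ (i : Fin n) : degreeIn G univ i = G.degree i := by
  rw [degreeIn, ← card_neighborFinset_eq_degree, neighborFinset_eq_filter]

lemma toppledConfig_empty (c : Fin n → ℕ) : toppledConfig G c ∅ = c := by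
  ext i
  simp [toppledConfig, degreeIn]

lemma toppledConfig_univ (c : Fin n → ℕ) : toppledConfig G c univ = c := by
  ext i
  simp [toppledConfig, degreeIn_univ]

lemma topple_toppledConfig {c : Fin n → ℕ} {S : Finset (Fin n)} {i : Fin n} (hi : i ∉ S)
    (hready : ∀ j ∈ insert i S, G.degree j ≤ c j + degreeIn G S j) :
    topple G (toppledConfig G c S) i = toppledConfig G c (insert i S) := by
  ext j
  by_cases hji : j = i
  · subst hji
    have hj := hready j (mem_insert_self j S)
    simp only [topple, toppledConfig, degreeIn_insert hi, mem_insert_self, hi, G.loopless.irrefl,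
      if_true, if_false]
    omega
  · have hj : (if j ∈ S then G.degree j else 0) ≤ c j + degreeIn G S j := by
      split_ifs with hjS
      exacts [hready j (mem_insert_of_mem hjS), Nat.zero_le _]
    simp only [topple, toppledConfig, degreeIn_insert hi, mem_insert, hji, false_or, if_false,
      G.adj_comm i j]
    split_ifs at hj ⊢ <;> omega

lemma degree_le_add_degreeIn {β : Type*} [LinearOrder β] {c : Fin n → ℕ} {r : Fin n → β}
    {j : Fin n} (hc : G.degree j ≤ c j + #{x | G.Adj j x ∧ r x < r j}) {S : Finset (Fin n)}
    (hS : ∀ x, G.Adj j x → r x < r j → x ∈ S) :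
    G.degree j ≤ c j + degreeIn G S j := by
  have hsub : ({x | G.Adj j x ∧ r x < r j} : Finset (Fin n)) ⊆ {x ∈ S | G.Adj j x} := by
    intro x hx
    simp only [mem_filter, mem_univ, true_and] at hx ⊢
    exact ⟨hS x hx.1 hx.2, hx.1⟩
  have := card_le_card hsub
  rw [degreeIn]
  omega

theorem validTopplings_and_toppleList_eq_of_sorted {β : Type*} [LinearOrder β] {c : Fin n → ℕ}
    (r : Fin n → β) (hc : ∀ i, G.degree i ≤ c i + #{j | G.Adj i j ∧ r j < r i}) :
    ∀ l : List (Fin n), l.Pairwise (r · ≤ r ·) → l.Nodup → (∀ x ∉ l, ∀ y ∈ l, r x ≤ r y) →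
      ValidTopplings G (toppledConfig G c {x | x ∉ l}) l ∧
        toppleList G (toppledConfig G c {x | x ∉ l}) l = c := by
  intro l
  induction l with
  | nil =>
    intro _ _ _
    simpa using ⟨trivial, toppledConfig_univ c⟩
  | cons i l ih =>
    intro hsort hnd hbelow
    obtain ⟨hi_le, hsort'⟩ := List.pairwise_cons.mp hsort
    obtain ⟨hil, hnd'⟩ := List.nodup_cons.mp hnd
    set S : Finset (Fin n) := {x | x ∉ i :: l}
    have hiS : i ∉ S := by simp [S]
    have hS' : ({x | x ∉ l} : Finset (Fin n)) = insert i S := by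
      ext x
      by_cases hxi : x = i <;> simp [S, hxi, hil]
    have hbelow' : ∀ x ∉ l, ∀ y ∈ i :: l, r x ≤ r y := by
      intro x hx y hy
      by_cases hxi : x = i
      · subst hxi
        rcases List.mem_cons.mp hy with rfl | hy
        exacts [le_rfl, hi_le y hy]
      · exact hbelow x (by simp [hxi, hx]) y hy
    have hready : ∀ j ∈ insert i S, G.degree j ≤ c j + degreeIn G S j := by
      intro j hj
      rw [← hS', mem_filter] at hj
      refine degree_le_add_degreeIn (hc j) fun x _ hlt => ?_
      simp only [S, mem_filter, mem_univ, true_and]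
      exact fun hx => (hbelow' j hj.2 x hx).not_gt hlt
    have hstep := topple_toppledConfig hiS hready
    obtain ⟨hvalid, htopple⟩ := ih hsort' hnd'
      fun x hx y hy => hbelow' x hx y (List.mem_cons_of_mem i hy)
    rw [hS', ← hstep] at hvalid htopple
    refine ⟨⟨?_, hvalid⟩, htopple⟩
    simpa [toppledConfig, hiS] using hready i (mem_insert_self i S)

lemma validTopplings_and_toppleList_eq_self {β : Type*} [LinearOrder β] {c : Fin n → ℕ}
    (r : Fin n → β) (hc : ∀ i, G.degree i ≤ c i + #{j | G.Adj i j ∧ r j < r i})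
    {l : List (Fin n)} (hsort : l.Pairwise (r · ≤ r ·)) (hnd : l.Nodup) (hmem : ∀ v, v ∈ l) :
    ValidTopplings G c l ∧ toppleList G c l = c := by
  have hS : ({x | x ∉ l} : Finset (Fin n)) = ∅ := by simp [hmem]
  simpa [hS, toppledConfig_empty] using
    validTopplings_and_toppleList_eq_of_sorted r hc l hsort hnd (by simp [hmem])

end Toppling

section TreeConfig

variable (G T : SimpleGraph (Fin n)) (s : Fin n)

lemma degree_eq_lamStat_add_muStat_add (i : Fin n) :
    G.degree i = lamStat G T s i + muStat G T s i +
      #{j | G.Adj i j ∧ T.dist s j < T.dist s i} := by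
  rw [← card_neighborFinset_eq_degree, neighborFinset_eq_filter, lamStat, muStat, card_filter,
    card_filter, card_filter, card_filter, ← sum_add_distrib, ← sum_add_distrib]
  refine sum_congr rfl fun j _ => ?_
  by_cases hij : G.Adj i j
  · simp only [hij, true_and]
    split_ifs <;> omega
  · simp [hij]

lemma degree_le_treeConfig_add (i : Fin n) :
    G.degree i ≤ treeConfig G T s i + #{j | G.Adj i j ∧ T.dist s j < T.dist s i} := by
  rw [degree_eq_lamStat_add_muStat_add G T s i, treeConfig]
  omega

lemma treeConfig_root : treeConfig G T s s = G.degree s := by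
  have hnu : nuStat G T s s = 0 := by simp [nuStat]
  simpa [treeConfig, hnu] using (degree_eq_lamStat_add_muStat_add G T s s).symm

variable {G T s}

lemma treeConfig_lt_degree (hTG : T ≤ G) (hT : T.Connected) {i : Fin n} (hi : i ≠ s) :
    treeConfig G T s i < G.degree i := by
  have hdeg := degree_eq_lamStat_add_muStat_add G T s i
  set Q : Finset (Fin n) := {q | T.Adj i q ∧ T.dist s q + 1 = T.dist s i}
  set L : Finset (Fin n) := {j | G.Adj i j ∧ T.dist s j < T.dist s i}
  obtain ⟨q₀, hq₀⟩ := hT.exists_adj_dist_add_one_eq hi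
  have hQ : Q.Nonempty := ⟨q₀, by simpa [Q] using hq₀⟩
  -- The largest parent candidate is a lower neighbour that `ν` never counts.
  set p := Q.max' hQ
  have hpQ : p ∈ Q := Q.max'_mem hQ
  simp only [Q, mem_filter, mem_univ, true_and] at hpQ
  have hpL : p ∈ L := by simpa [L] using ⟨hTG hpQ.1, by omega⟩
  have hnu_sub : ({j | G.Adj i j ∧ T.dist s j + 1 = T.dist s i ∧
      ∃ q, T.Adj i q ∧ T.dist s q + 1 = T.dist s i ∧ j < q} : Finset (Fin n)) ⊆ L.erase p := by
    intro j hj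
    simp only [mem_filter, mem_univ, true_and] at hj
    obtain ⟨hij, hj, q, hiq, hq, hjq⟩ := hj
    have hqp : q ≤ p := Q.le_max' q (by simpa [Q] using ⟨hiq, hq⟩)
    exact mem_erase.mpr ⟨(hjq.trans_le hqp).ne, by simpa [L] using ⟨hij, by omega⟩⟩
  have hnu : nuStat G T s i < #L := (card_le_card hnu_sub).trans_lt (card_erase_lt_of_mem hpL)
  rw [treeConfig]
  omega

theorem treeConfig_isRecurrent_of_le (hTG : T ≤ G) (hT : T.Connected) :
    IsRecurrent G s (treeConfig G T s) := by
  obtain ⟨l, hsort, hnd, hmem⟩ := List.exists_pairwise_nodup_forall_mem (T.dist s)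
  have hhead : l.head? = some s :=
    List.head?_eq_of_pairwise_le hsort (hmem s) fun x hx => by
      simpa using hT.pos_dist_of_ne (Ne.symm hx)
  obtain ⟨hvalid, htopple⟩ := validTopplings_and_toppleList_eq_self (T.dist s)
    (degree_le_treeConfig_add G T s) hsort hnd hmem
  exact ⟨treeConfig_root G T s, fun i hi => treeConfig_lt_degree hTG hT hi,
    l, hhead, hnd, hmem, hvalid, htopple⟩

end TreeConfig

theorem treeConfig_isRecurrent_general {n : ℕ} (π : Equiv.Perm (Fin n))
    (s : Fin n) (T : SimpleGraph (Fin n))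
    (hsub : T ≤ permGraph π) (htree : T.IsTree) :
    IsRecurrent (permGraph π) s (treeConfig (permGraph π) T s) :=
  treeConfig_isRecurrent_of_le hsub htree.connected

/-- for an indecomposable permutation `π` and a spanning tree `T` of
`G = G_π` rooted at the sink `s`, the configuration `c(T)` with
`c_i = λ_i + μ_i + ν_i` is recurrent on `(G, s)`. -/
theorem treeConfig_isRecurrent {n : ℕ} (π : Equiv.Perm (Fin n))
    (hπ : IsIndecomposable π) (s : Fin n) (T : SimpleGraph (Fin n))
    (hsub : T ≤ permGraph π) (htree : T.IsTree) :
    IsRecurrent (permGraph π) s (treeConfig (permGraph π) T s) :=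
  treeConfig_isRecurrent_general π s T hsub htree
end

section
/- For any spanning tree T of a permutation graph G_π with sink s, the level of the corresponding recurrent configuration c(T) equals Σ_{i=1}^n ( μ_i(T)/2 + ν_i(T) ). -/
open Finset
open scoped Classical

lemma key_handshake {n : ℕ} (G : SimpleGraph (Fin n)) (d : Fin n → ℕ) :
    2 * (∑ i, ((univ.filter fun j => G.Adj i j ∧ d i < d j).card))
      + ∑ i, ((univ.filter fun j => G.Adj i j ∧ d j = d i).card)
    = 2 * G.edgeFinset.card := by
  classical
  have hdeg : ∑ i, G.degree i = 2 * G.edgeFinset.card :=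
    SimpleGraph.sum_degrees_eq_twice_card_edges G
  have hsplit : ∀ i : Fin n, G.degree i =
      ((univ.filter fun j => G.Adj i j ∧ d i < d j).card)
      + ((univ.filter fun j => G.Adj i j ∧ d j < d i).card)
      + ((univ.filter fun j => G.Adj i j ∧ d j = d i).card) := by
    intro i
    rw [SimpleGraph.degree, SimpleGraph.neighborFinset_eq_filter]
    simp only [Finset.card_filter]
    rw [← Finset.sum_add_distrib, ← Finset.sum_add_distrib]
    apply Finset.sum_congr rfl
    intro j _
    rcases lt_trichotomy (d i) (d j) with h | h | h <;> by_cases ha : G.Adj i j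
    · simp [ha, h, asymm h, h.ne']
    · simp [ha]
    · simp [ha, h, lt_irrefl]
    · simp [ha]
    · simp [ha, h, asymm h, h.ne]
    · simp [ha]
  have hswap : (∑ i, ((univ.filter fun j => G.Adj i j ∧ d j < d i).card))
      = ∑ i, ((univ.filter fun j => G.Adj i j ∧ d i < d j).card) := by
    simp only [Finset.card_filter]
    rw [Finset.sum_comm]
    apply Finset.sum_congr rfl
    intro i _
    apply Finset.sum_congr rfl
    intro j _
    congr 1
    rw [SimpleGraph.adj_comm]
  calc 2 * (∑ i, ((univ.filter fun j => G.Adj i j ∧ d i < d j).card))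
      + ∑ i, ((univ.filter fun j => G.Adj i j ∧ d j = d i).card)
      = ∑ i, (((univ.filter fun j => G.Adj i j ∧ d i < d j).card)
        + ((univ.filter fun j => G.Adj i j ∧ d j < d i).card)
        + ((univ.filter fun j => G.Adj i j ∧ d j = d i).card)) := by
        rw [Finset.sum_add_distrib, Finset.sum_add_distrib, hswap]; ring
    _ = ∑ i, G.degree i := by exact Finset.sum_congr rfl fun i _ => (hsplit i).symm
    _ = 2 * G.edgeFinset.card := hdeg

/-- for any spanning tree `T` of the permutation graph `G_π` with sink
`s`, the level of the recurrent configuration `c(T)` equals `∑ i (μ_i/2 + ν_i)`. -/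
theorem level_treeConfig {n : ℕ} (π : Equiv.Perm (Fin n))
    (hπ : IsIndecomposable π) (s : Fin n) (T : SimpleGraph (Fin n))
    (hsub : T ≤ permGraph π) (htree : T.IsTree) :
    (level (permGraph π) (treeConfig (permGraph π) T s) : ℚ) =
      ∑ i : Fin n, ((muStat (permGraph π) T s i : ℚ) / 2
        + (nuStat (permGraph π) T s i : ℚ)) := by
  classical
  have key := key_handshake (permGraph π) (fun j => T.dist s j)
  have hlam : ∀ i, lamStat (permGraph π) T s i
      = (univ.filter fun j => (permGraph π).Adj i j ∧ T.dist s i < T.dist s j).card := by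
    intro i; rfl
  have hmu : ∀ i, muStat (permGraph π) T s i
      = (univ.filter fun j => (permGraph π).Adj i j ∧ T.dist s j = T.dist s i).card := by
    intro i; rfl
  simp only [← hlam, ← hmu] at key
  have keyQ : 2 * (∑ i, (lamStat (permGraph π) T s i : ℚ))
      + ∑ i, (muStat (permGraph π) T s i : ℚ)
      = 2 * ((permGraph π).edgeFinset.card : ℚ) := by
    exact_mod_cast congrArg (Nat.cast : ℕ → ℚ) key
  simp only [level, treeConfig]
  push_cast
  rw [Finset.sum_add_distrib, Finset.sum_add_distrib, Finset.sum_add_distrib]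
  rw [← Finset.sum_div]
  linarith
end

section
/- For any spanning tree T of a permutation graph G_π with sink s, the canonical toppling of the recurrent configuration c(T) is given by the breadth-first levels of T: CanonTop(c(T)) = T^{(0)}, T^{(1)}, T^{(2)}, ..., where T^{(k)} is the set of vertices at distance k from s in T. -/
open Finset
open scoped Classical

/-- The configuration (with values in `ℤ`) obtained from `c` after toppling every
vertex of `D` exactly once: `i` gains one grain per neighbor in `D`, and loses
`deg i` grains if `i ∈ D`. -/
noncomputable def confAfterSet {n : ℕ} (G : SimpleGraph (Fin n)) (c : Fin n → ℕ)
    (D : Finset (Fin n)) (i : Fin n) : ℤ :=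
  (c i : ℤ) + ((D.filter (G.Adj i)).card : ℤ) - (if i ∈ D then (G.degree i : ℤ) else 0)

/-- Cumulative sets of the canonical toppling: `canonTopCum k` is the set of vertices
toppled during the first `k + 1` rounds (the sink `s` is toppled in round `0`, and a
vertex is toppled as soon as it becomes unstable). -/
noncomputable def canonTopCum {n : ℕ} (G : SimpleGraph (Fin n)) (s : Fin n)
    (c : Fin n → ℕ) : ℕ → Finset (Fin n)
  | 0 => {s}
  | k + 1 => canonTopCum G s c k ∪
      Finset.univ.filter (fun i => i ∉ canonTopCum G s c k ∧
        (G.degree i : ℤ) ≤ confAfterSet G c (canonTopCum G s c k) i)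

/-- The parts of the canonical toppling: `P 0 = {s}` and `P (k+1)` is the set of
(non-sink) vertices becoming unstable after toppling all of `P 0, …, P k`. -/
noncomputable def canonTopPart {n : ℕ} (G : SimpleGraph (Fin n)) (s : Fin n)
    (c : Fin n → ℕ) : ℕ → Finset (Fin n)
  | 0 => {s}
  | k + 1 => canonTopCum G s c (k + 1) \ canonTopCum G s c k

lemma exists_parent {n : ℕ} (T : SimpleGraph (Fin n)) (hc : T.Connected) (s i : Fin n)
    (hi : 1 ≤ T.dist s i) : ∃ q : Fin n, T.Adj i q ∧ T.dist s q + 1 = T.dist s i := by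
  obtain ⟨w, hw⟩ := (hc s i).exists_walk_length_eq_dist
  have hnil : ¬ w.reverse.Nil := by
    rw [SimpleGraph.Walk.nil_iff_length_eq, SimpleGraph.Walk.length_reverse, hw]; omega
  refine ⟨w.reverse.getVert 1, w.reverse.adj_snd hnil, ?_⟩
  have h1 : T.dist (w.reverse.getVert 1) s ≤ w.reverse.tail.length := SimpleGraph.dist_le _
  have h2 : w.reverse.tail.length + 1 = w.reverse.length :=
    SimpleGraph.Walk.length_tail_add_one hnil
  have h3 : T.dist s i ≤ T.dist s (w.reverse.getVert 1) + T.dist (w.reverse.getVert 1) i :=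
    hc.dist_triangle
  have h4 : T.dist (w.reverse.getVert 1) i ≤ 1 :=
    SimpleGraph.dist_le (SimpleGraph.Walk.cons (w.reverse.adj_snd hnil).symm
      SimpleGraph.Walk.nil)
  rw [SimpleGraph.dist_comm] at h1
  rw [SimpleGraph.Walk.length_reverse, hw] at h2
  omega

lemma nu_lt {n : ℕ} {G T : SimpleGraph (Fin n)} {s i : Fin n} (hsub : T ≤ G)
    (hc : T.Connected) (hm : 1 ≤ T.dist s i) :
    nuStat G T s i < (univ.filter fun j => G.Adj i j ∧ T.dist s j + 1 = T.dist s i).card := by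
  obtain ⟨q1, hq1, hq1d⟩ := exists_parent T hc s i hm
  have hPne : (univ.filter fun q => T.Adj i q ∧ T.dist s q + 1 = T.dist s i).Nonempty :=
    ⟨q1, by simp [hq1, hq1d]⟩
  set q0 := (univ.filter fun q => T.Adj i q ∧ T.dist s q + 1 = T.dist s i).max' hPne with hq0def
  have hq0 : T.Adj i q0 ∧ T.dist s q0 + 1 = T.dist s i := by
    have := Finset.max'_mem _ hPne
    simpa using this
  have hq0mem : q0 ∈ univ.filter fun j => G.Adj i j ∧ T.dist s j + 1 = T.dist s i := by
    simp [hsub hq0.1, hq0.2]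
  have hss : (univ.filter fun j => G.Adj i j ∧ T.dist s j + 1 = T.dist s i ∧
      ∃ q : Fin n, T.Adj i q ∧ T.dist s q + 1 = T.dist s i ∧ j < q) ⊆
      (univ.filter fun j => G.Adj i j ∧ T.dist s j + 1 = T.dist s i).erase q0 := by
    intro j hj
    simp only [mem_filter, mem_univ, true_and] at hj
    obtain ⟨ha, hd, q, hq, hqd, hlt⟩ := hj
    have hle : q ≤ q0 := Finset.le_max' _ q (by simp [hq, hqd])
    refine mem_erase.mpr ⟨?_, by simp [ha, hd]⟩
    intro hje
    rw [hje] at hlt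
    exact absurd (lt_of_lt_of_le hlt hle) (lt_irrefl q0)
  exact lt_of_le_of_lt (card_le_card hss) (card_erase_lt_of_mem hq0mem)

lemma conf_iff {n : ℕ} {G T : SimpleGraph (Fin n)} {s : Fin n} (hsub : T ≤ G)
    (hc : T.Connected) (k : ℕ) (i : Fin n) (hik : k < T.dist s i) :
    ((G.degree i : ℤ) ≤ confAfterSet G (treeConfig G T s)
      (univ.filter fun j => T.dist s j ≤ k) i) ↔ T.dist s i = k + 1 := by
  -- abbreviations
  have hm : 1 ≤ T.dist s i := by omega
  -- degree split
  have hsplit : G.degree i = lamStat G T s i + muStat G T s i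
      + (univ.filter fun j => G.Adj i j ∧ T.dist s j + 1 ≤ T.dist s i).card := by
    have hdeg0 : G.degree i = (univ.filter fun j => G.Adj i j).card := by
      simp [SimpleGraph.degree, SimpleGraph.neighborFinset_eq_filter]
    have e1 := card_filter_add_card_filter_not
      (s := univ.filter fun j => G.Adj i j) (p := fun j => T.dist s i < T.dist s j)
    have e2 := card_filter_add_card_filter_not
      (s := (univ.filter fun j => G.Adj i j).filter fun j => ¬ T.dist s i < T.dist s j)
      (p := fun j => T.dist s j = T.dist s i)
    simp only [filter_filter, and_assoc] at e1 e2
    have r1 : (univ.filter fun j => G.Adj i j ∧ ¬T.dist s i < T.dist s j ∧ T.dist s j = T.dist s i)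
        = univ.filter fun j => G.Adj i j ∧ T.dist s j = T.dist s i := by
      ext j
      simp only [mem_filter, mem_univ, true_and]
      constructor
      · rintro ⟨h1, _, h3⟩; exact ⟨h1, h3⟩
      · rintro ⟨h1, h3⟩; exact ⟨h1, by omega, h3⟩
    have r2 : (univ.filter fun j => G.Adj i j ∧ ¬T.dist s i < T.dist s j ∧ ¬T.dist s j = T.dist s i)
        = univ.filter fun j => G.Adj i j ∧ T.dist s j + 1 ≤ T.dist s i := by
      ext j
      simp only [mem_filter, mem_univ, true_and]
      constructor
      · rintro ⟨h1, h2, h3⟩; exact ⟨h1, by omega⟩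
      · rintro ⟨h1, h3⟩; exact ⟨h1, by omega, by omega⟩
    rw [r1, r2] at e2
    rw [hdeg0, lamStat, muStat]
    omega
  -- the conf value
  have hnotin : i ∉ univ.filter fun j => T.dist s j ≤ k := by simp; omega
  have hfilter : ((univ.filter fun j => T.dist s j ≤ k).filter (G.Adj i))
      = univ.filter fun j => G.Adj i j ∧ T.dist s j ≤ k := by
    rw [filter_filter]
    ext j
    simp only [mem_filter, mem_univ, true_and, and_comm]
  have hconf : confAfterSet G (treeConfig G T s) (univ.filter fun j => T.dist s j ≤ k) i
      = (treeConfig G T s i : ℤ)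
        + ((univ.filter fun j => G.Adj i j ∧ T.dist s j ≤ k).card : ℤ) := by
    rw [confAfterSet, hfilter, if_neg hnotin]
    ring
  rw [hconf]
  have hν := nu_lt hsub hc hm
  have htc : treeConfig G T s i = lamStat G T s i + muStat G T s i + nuStat G T s i := rfl
  constructor
  · intro hle
    by_contra hne
    have hk2 : k + 2 ≤ T.dist s i := by omega
    -- N + E ≤ C
    have hdisj : Disjoint (univ.filter fun j => G.Adj i j ∧ T.dist s j ≤ k)
        (univ.filter fun j => G.Adj i j ∧ T.dist s j + 1 = T.dist s i) := by
      rw [Finset.disjoint_left]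
      intro j hj1 hj2
      simp only [mem_filter, mem_univ, true_and] at hj1 hj2
      omega
    have hun : (univ.filter fun j => G.Adj i j ∧ T.dist s j ≤ k)
        ∪ (univ.filter fun j => G.Adj i j ∧ T.dist s j + 1 = T.dist s i)
        ⊆ univ.filter fun j => G.Adj i j ∧ T.dist s j + 1 ≤ T.dist s i := by
      intro j hj
      rcases Finset.mem_union.mp hj with h | h <;>
        · simp only [mem_filter, mem_univ, true_and] at h ⊢
          exact ⟨h.1, by omega⟩
    have hNE : (univ.filter fun j => G.Adj i j ∧ T.dist s j ≤ k).card
        + (univ.filter fun j => G.Adj i j ∧ T.dist s j + 1 = T.dist s i).card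
        ≤ (univ.filter fun j => G.Adj i j ∧ T.dist s j + 1 ≤ T.dist s i).card := by
      rw [← card_union_of_disjoint hdisj]
      exact card_le_card hun
    omega
  · intro heq
    have hNC : (univ.filter fun j => G.Adj i j ∧ T.dist s j ≤ k)
        = univ.filter fun j => G.Adj i j ∧ T.dist s j + 1 ≤ T.dist s i := by
      ext j
      simp only [mem_filter, mem_univ, true_and]
      constructor
      · rintro ⟨h1, h2⟩; exact ⟨h1, by omega⟩
      · rintro ⟨h1, h2⟩; exact ⟨h1, by omega⟩
    rw [hNC]
    omega

lemma cum_level {n : ℕ} {G T : SimpleGraph (Fin n)} {s : Fin n} (hsub : T ≤ G)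
    (hc : T.Connected) :
    ∀ k : ℕ, canonTopCum G s (treeConfig G T s) k
      = univ.filter (fun i => T.dist s i ≤ k) := by
  intro k
  induction k with
  | zero =>
      show ({s} : Finset (Fin n)) = _
      ext i
      simp only [mem_singleton, mem_filter, mem_univ, true_and, Nat.le_zero,
        hc.dist_eq_zero_iff]
      exact eq_comm
  | succ k ih =>
      show canonTopCum G s (treeConfig G T s) k ∪ _ = _
      rw [ih]
      ext i
      simp only [mem_union, mem_filter, mem_univ, true_and, ih]
      constructor
      · rintro (h | ⟨hnot, hle⟩)
        · omega
        · have hik : k < T.dist s i := by omega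
          have := (conf_iff hsub hc k i hik).mp hle
          omega
      · intro hle
        by_cases h : T.dist s i ≤ k
        · exact Or.inl h
        · have hik : k < T.dist s i := by omega
          have heq : T.dist s i = k + 1 := by omega
          exact Or.inr ⟨by omega, (conf_iff hsub hc k i hik).mpr heq⟩

/-- for any spanning tree `T` of the permutation graph `G_π` with sink
`s`, the canonical toppling of the recurrent configuration `c(T)` is given by the
breadth-first levels of `T`: the `k`-th part is the set of vertices at distance `k`
from `s` in `T`. -/
theorem canonTop_treeConfig {n : ℕ} (π : Equiv.Perm (Fin n))
    (hπ : IsIndecomposable π) (s : Fin n) (T : SimpleGraph (Fin n))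
    (hsub : T ≤ permGraph π) (htree : T.IsTree) :
    ∀ k : ℕ, canonTopPart (permGraph π) s (treeConfig (permGraph π) T s) k =
      Finset.univ.filter (fun i => T.dist s i = k) := by
  have hc : T.Connected := htree.isConnected
  intro k
  cases k with
  | zero =>
      show ({s} : Finset (Fin n)) = _
      ext i
      simp only [mem_singleton, mem_filter, mem_univ, true_and, hc.dist_eq_zero_iff]
      exact eq_comm
  | succ k =>
      show canonTopCum _ s _ (k + 1) \ canonTopCum _ s _ k = _
      rw [cum_level hsub hc, cum_level hsub hc]
      ext i
      simp only [mem_sdiff, mem_filter, mem_univ, true_and]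
      omega
end

section
/- Let G = (V,E) be a graph with a total order ≺ on E, T a spanning tree of G, and e = (i,j) an edge of G not in T. If the edge order ≺_T is produced by the BFS-based Algorithm 3.1 and the height of i exceeds the height of j by at least 2 (heights in T rooted at the sink s), then e is not externally active with respect to ≺_T. -/
open Finset
open scoped Classical

/-- `a` is visited strictly before `b` in the breadth-first search of Algorithm 3.1
on the tree `T` rooted at `s`: vertices are visited by increasing height, and within
a height by decreasing label. -/
def visitBefore {n : ℕ} (T : SimpleGraph (Fin n)) (s a b : Fin n) : Prop :=
  T.dist s a < T.dist s b ∨ (T.dist s a = T.dist s b ∧ b < a)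

/-- The total order `≺_T` on edges produced by Algorithm 3.1: an edge is written
`{a, b}` with `a` its first-visited endpoint; edges are ordered by the visit order of
their first-visited endpoint, and for a common first endpoint `a`, the edge with the
larger second endpoint is smaller. -/
def edgeLT {n : ℕ} (T : SimpleGraph (Fin n)) (s : Fin n)
    (e f : Sym2 (Fin n)) : Prop :=
  ∃ a b c d : Fin n, e = s(a, b) ∧ f = s(c, d) ∧
    visitBefore T s a b ∧ visitBefore T s c d ∧
    (visitBefore T s a c ∨ (a = c ∧ d < b))

/-- An edge `e` of `G` not in the spanning tree `T` is externally active for the edge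
order `O` if it is the maximal edge of the unique cycle of `T ∪ {e}`, i.e. every edge
on the `T`-path between the endpoints of `e` is smaller than `e`. -/
def ExtActive {n : ℕ} (G T : SimpleGraph (Fin n))
    (O : Sym2 (Fin n) → Sym2 (Fin n) → Prop) (e : Sym2 (Fin n)) : Prop :=
  e ∈ G.edgeSet ∧ e ∉ T.edgeSet ∧
    ∀ a b : Fin n, e = s(a, b) →
      ∀ p : T.Walk a b, p.IsPath → ∀ f ∈ p.edges, O f e

/-!
Under `≺_T` an edge can only precede `e = {i, j}` if one of its endpoints is no higher
than `j`. The `T`-path from `i` to `j` starts with a tree edge `{i, x}`, and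
`height x ≥ height i - 1 ≥ height j + 1`, so both its endpoints lie strictly above `j`:
that edge of the fundamental cycle of `e` does not precede `e`.
-/

open SimpleGraph

theorem visitBefore.dist_le {n : ℕ} {T : SimpleGraph (Fin n)} {s a b : Fin n}
    (h : visitBefore T s a b) : T.dist s a ≤ T.dist s b := by
  rcases h with h | ⟨h, -⟩ <;> omega

theorem edgeLT.exists_mem_dist_le {n : ℕ} {T : SimpleGraph (Fin n)} {s p q : Fin n}
    {f : Sym2 (Fin n)} (h : edgeLT T s f s(p, q)) :
    ∃ a ∈ f, T.dist s a ≤ T.dist s p ∧ T.dist s a ≤ T.dist s q := by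
  obtain ⟨a, b, c, d, rfl, he, -, hcd, hac⟩ := h
  have hac : T.dist s a ≤ T.dist s c := by
    rcases hac with hac | ⟨rfl, -⟩
    · exact hac.dist_le
    · exact le_rfl
  have hcd := hcd.dist_le
  refine ⟨a, Sym2.mem_mk_left a b, ?_⟩
  rcases Sym2.eq_iff.mp he with ⟨rfl, rfl⟩ | ⟨rfl, rfl⟩ <;> omega

theorem not_extActive_of_height_ge_two_general {n : ℕ} (G T : SimpleGraph (Fin n))
    (s : Fin n) (htree : T.IsTree) (i j : Fin n)
    (hht : T.dist s j + 2 ≤ T.dist s i) :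
    ¬ ExtActive G T (edgeLT T s) (s(i, j)) := by
  rintro ⟨-, -, hmax⟩
  obtain ⟨p, hp⟩ := htree.connected.exists_isPath i j
  have hnil : ¬p.Nil := Walk.not_nil_of_ne (by rintro rfl; omega)
  obtain ⟨a, ha, -, haj⟩ :=
    (hmax i j rfl p hp _ (p.mk_start_snd_mem_edges hnil)).exists_mem_dist_le
  have hsnd := (p.adj_snd hnil).diff_dist_adj (u := s)
  rcases Sym2.mem_iff.mp ha with rfl | rfl <;> omega

/-- if `e = (i, j)` is an edge of `G` not in the spanning tree `T` and
the height of `i` exceeds the height of `j` by at least `2` (heights in `T` rooted at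
the sink `s`), then `e` is not externally active for the order `≺_T` of Alg. 3.1. -/
theorem not_extActive_of_height_ge_two {n : ℕ} (G T : SimpleGraph (Fin n))
    (s : Fin n) (hsub : T ≤ G) (htree : T.IsTree) (i j : Fin n)
    (hadj : G.Adj i j) (hnotT : s(i, j) ∉ T.edgeSet)
    (hht : T.dist s j + 2 ≤ T.dist s i) :
    ¬ ExtActive G T (edgeLT T s) (s(i, j)) :=
  not_extActive_of_height_ge_two_general G T s htree i j hht
end

section
/- Let π be a permutation of [n] with sink s and c a minimal recurrent configuration on the permutation graph G_π. Then the canonical toppling CanonTop(c) = P_0, ..., P_k is a (π,s)-compatible ordered partition of [n]: P_0 = {s}; no two elements of any part P_j form an inversion of π; and for every j ≥ 1 and i ∈ P_j there exists i' ∈ P_{j−1} forming an inversion of π with i. -/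
open Finset
open scoped Classical

/-- `P 0, …, P k` is a `(π, s)`-compatible ordered partition of `[n]`:
`P 0 = {s}`; the parts are nonempty, pairwise disjoint, cover everything (and `P j`
is empty for `j > k`); no two elements of a part form an inversion of `π`; and every
element of `P j` (`j ≥ 1`) forms an inversion with some element of `P (j-1)`. -/
def IsCompatiblePartition {n : ℕ} (π : Equiv.Perm (Fin n)) (s : Fin n)
    (P : ℕ → Finset (Fin n)) (k : ℕ) : Prop :=
  P 0 = {s} ∧
  (∀ j, j ≤ k → (P j).Nonempty) ∧
  (∀ j, k < j → P j = ∅) ∧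
  (∀ i j, i < j → Disjoint (P i) (P j)) ∧
  (Finset.range (k + 1)).biUnion P = Finset.univ ∧
  (∀ j, j ≤ k → ∀ a ∈ P j, ∀ b ∈ P j, ¬ (permGraph π).Adj a b) ∧
  (∀ j, 1 ≤ j → j ≤ k → ∀ a ∈ P j, ∃ b ∈ P (j - 1), (permGraph π).Adj a b)

/-! Let `r i` be the round of the canonical toppling in which `i` topples. A vertex topples in
round `m + 1` exactly when its neighbours of rounds `≤ m` supply the chips it lacks, so
`deg i ≤ c i + #{neighbours of i in earlier rounds}` for every `i` (for the sink, `c s = deg s`).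
Summing over `i`, `2|E| ≤ Σ c + #{edges between different rounds}`, and `Σ c = |E|` at level `0`:
no edge joins two vertices of the same round. A vertex of round `m + 1` with no neighbour in
round `m` would already have toppled in round `m` (for `m = 0`: it would be unstable in `c`).
That every vertex topples at all comes from recurrence: the rounds stop at a set `D` that no
outside vertex can enter, and the legal toppling sequence of `c` never leaves `D`. -/

section Toppling

variable {n : ℕ} {G : SimpleGraph (Fin n)}

lemma validTopplings_append {c : Fin n → ℕ} {L R : List (Fin n)} :
    ValidTopplings G c (L ++ R) ↔
      ValidTopplings G c L ∧ ValidTopplings G (toppleList G c L) R := by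
  induction L generalizing c with
  | nil => simp [ValidTopplings, toppleList]
  | cons i L ih => simp [ValidTopplings, toppleList, ih, and_assoc]

lemma toppleList_apply_of_notMem {c : Fin n → ℕ} {L : List (Fin n)} {v : Fin n}
    (hL : L.Nodup) (hv : v ∉ L) :
    toppleList G c L v = c v + #(L.toFinset.filter (G.Adj v)) := by
  induction L generalizing c with
  | nil => simp [toppleList]
  | cons i L ih =>
    rw [List.mem_cons, not_or] at hv
    rw [List.nodup_cons] at hL
    rw [toppleList, ih hL.2 hv.2, List.toFinset_cons, filter_insert]
    by_cases hvi : G.Adj v i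
    · rw [if_pos hvi, card_insert_of_notMem fun h => hL.1 (by simpa using (mem_filter.1 h).1)]
      simp only [topple, hv.1, ↓reduceIte, G.adj_comm i v, hvi]
      omega
    · simp [topple, hv.1, G.adj_comm i v, hvi]

lemma forall_mem_of_validTopplings {c : Fin n → ℕ} {D : Finset (Fin n)}
    (hD : ∀ v ∉ D, c v + #(D.filter (G.Adj v)) < G.degree v) {l : List (Fin n)}
    (hl : ValidTopplings G c l) (hnd : l.Nodup) : ∀ v ∈ l, v ∈ D := by
  induction l using List.reverseRecOn with
  | nil => simp
  | append_singleton l v ih =>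
    rw [validTopplings_append] at hl
    rw [List.nodup_append] at hnd
    have hlD := ih hl.1 hnd.1
    have hvl : v ∉ l := fun hv => hnd.2.2 v hv v (List.mem_singleton_self v) rfl
    have hvD : v ∈ D := by
      by_contra hvD
      have hunstable : G.degree v ≤ toppleList G c l v := hl.2.1
      have hcard : #(l.toFinset.filter (G.Adj v)) ≤ #(D.filter (G.Adj v)) :=
        card_le_card (filter_subset_filter _ fun w hw => hlD w (List.mem_toFinset.1 hw))
      rw [toppleList_apply_of_notMem hnd.1 hvl] at hunstable
      have := hD v hvD
      omega
    simpa [or_imp, forall_and] using ⟨hlD, hvD⟩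

end Toppling

section CanonicalToppling

variable {n : ℕ} {G : SimpleGraph (Fin n)} {s : Fin n} {c : Fin n → ℕ}

lemma mem_canonTopCum_succ {i : Fin n} {m : ℕ} :
    i ∈ canonTopCum G s c (m + 1) ↔ i ∈ canonTopCum G s c m ∨
      i ∉ canonTopCum G s c m ∧
        G.degree i ≤ c i + #((canonTopCum G s c m).filter (G.Adj i)) := by
  rw [canonTopCum, mem_union, mem_filter]
  by_cases hi : i ∈ canonTopCum G s c m
  · simp [hi]
  · have hconf : confAfterSet G c (canonTopCum G s c m) i =
        ((c i + #((canonTopCum G s c m).filter (G.Adj i)) : ℕ) : ℤ) := by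
      simp [confAfterSet, hi]
    simp only [hi, hconf, Nat.cast_le, mem_univ, not_false_eq_true, true_and, false_or]

variable (G s c) in
lemma canonTopCum_mono : Monotone (canonTopCum G s c) :=
  monotone_nat_of_le_succ fun _ => subset_union_left

lemma exists_canonTopCum_eq_univ (hrec : IsRecurrent G s c) :
    ∃ K, canonTopCum G s c K = univ := by
  obtain ⟨K, hK⟩ :=
    WellFoundedGT.monotone_chain_condition ⟨canonTopCum G s c, canonTopCum_mono G s c⟩
  obtain ⟨-, -, l, -, hnd, hall, hvalid, -⟩ := hrec
  refine ⟨K, eq_univ_of_forall fun v => forall_mem_of_validTopplings ?_ hvalid hnd v (hall v)⟩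
  intro v hv
  have hstab : canonTopCum G s c (K + 1) = canonTopCum G s c K := (hK (K + 1) K.le_succ).symm
  have hv' : v ∉ canonTopCum G s c (K + 1) := hstab ▸ hv
  rw [mem_canonTopCum_succ] at hv'
  push Not at hv'
  exact hv'.2 hv

variable (G s c) in
/-- The round in which `i` topples; the junk value `0` if it never does, so the lemmas below
assume that every vertex topples. -/
noncomputable def canonRank (i : Fin n) : ℕ :=
  sInf {m | i ∈ canonTopCum G s c m}

variable {K : ℕ} (hK : canonTopCum G s c K = univ)
include hK

lemma mem_canonTopCum_iff_canonRank_le {i : Fin n} {m : ℕ} :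
    i ∈ canonTopCum G s c m ↔ canonRank G s c i ≤ m :=
  ⟨fun h => Nat.sInf_le h,
    fun h => canonTopCum_mono G s c h <|
      Nat.sInf_mem (⟨K, by simp [hK]⟩ : {m | i ∈ canonTopCum G s c m}.Nonempty)⟩

lemma mem_canonTopPart_iff {i : Fin n} {j : ℕ} :
    i ∈ canonTopPart G s c j ↔ canonRank G s c i = j := by
  cases j with
  | zero => rw [← Nat.le_zero, ← mem_canonTopCum_iff_canonRank_le hK]; rfl
  | succ m =>
    rw [canonTopPart, mem_sdiff, mem_canonTopCum_iff_canonRank_le hK,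
      mem_canonTopCum_iff_canonRank_le hK]
    omega

lemma degree_le_of_canonRank_eq_succ {i : Fin n} {m : ℕ} (hi : canonRank G s c i = m + 1) :
    G.degree i ≤ c i + #((canonTopCum G s c m).filter (G.Adj i)) := by
  have h := (mem_canonTopCum_succ (i := i) (m := m)).1
    ((mem_canonTopCum_iff_canonRank_le hK).2 hi.le)
  exact h.resolve_left (by rw [mem_canonTopCum_iff_canonRank_le hK]; omega) |>.2

lemma degree_le_add_card_earlier (hs : c s = G.degree s) (i : Fin n) :
    G.degree i ≤ c i + #{w | G.Adj i w ∧ canonRank G s c w < canonRank G s c i} := by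
  rcases hi : canonRank G s c i with _ | m
  · have : i = s := by simpa [canonTopPart] using (mem_canonTopPart_iff hK).2 hi
    subst this
    omega
  · have hearlier : (canonTopCum G s c m).filter (G.Adj i) =
        ({w | G.Adj i w ∧ canonRank G s c w < m + 1} : Finset (Fin n)) := by
      ext w
      simp only [mem_filter, mem_univ, true_and, mem_canonTopCum_iff_canonRank_le hK,
        Nat.lt_succ_iff, and_comm]
    rw [← hearlier]
    exact degree_le_of_canonRank_eq_succ hK hi

lemma exists_adj_canonRank_eq_of_canonRank_eq_succ (hstable : ∀ i, i ≠ s → c i < G.degree i)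
    {a : Fin n} {m : ℕ} (ha : canonRank G s c a = m + 1) :
    ∃ b, canonRank G s c b = m ∧ G.Adj a b := by
  by_contra! hno
  have hdeg := degree_le_of_canonRank_eq_succ hK ha
  cases m with
  | zero =>
    have hnone : (canonTopCum G s c 0).filter (G.Adj a) = ∅ :=
      filter_eq_empty_iff.2 fun b hb =>
        hno b (Nat.le_zero.1 ((mem_canonTopCum_iff_canonRank_le hK).1 hb))
    have has : a ≠ s := by
      intro has
      have h0 : a ∈ canonTopPart G s c 0 := by rw [has]; exact mem_singleton_self s
      rw [mem_canonTopPart_iff hK] at h0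
      omega
    have := hstable a has
    rw [hnone, card_empty] at hdeg
    omega
  | succ m =>
    have hsub : (canonTopCum G s c (m + 1)).filter (G.Adj a) ⊆
        (canonTopCum G s c m).filter (G.Adj a) := by
      intro b hb
      rw [mem_filter, mem_canonTopCum_iff_canonRank_le hK] at hb ⊢
      exact ⟨lt_of_le_of_ne hb.1 (hno b · hb.2) |> Nat.lt_succ_iff.1, hb.2⟩
    have hnot : a ∉ canonTopCum G s c m := by
      rw [mem_canonTopCum_iff_canonRank_le hK]; omega
    have : a ∈ canonTopCum G s c (m + 1) :=
      mem_canonTopCum_succ.2 (Or.inr ⟨hnot, hdeg.trans (by grw [card_le_card hsub])⟩)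
    rw [mem_canonTopCum_iff_canonRank_le hK] at this
    omega

end CanonicalToppling

lemma ne_of_adj_of_level_eq_zero {n : ℕ} {G : SimpleGraph (Fin n)} {c : Fin n → ℕ}
    (hmin : level G c = 0) (r : Fin n → ℕ)
    (hdeg : ∀ i, G.degree i ≤ c i + #{w | G.Adj i w ∧ r w < r i})
    {a b : Fin n} (hab : G.Adj a b) : r a ≠ r b := by
  have hsplit : ∀ i, #{w | G.Adj i w ∧ r w < r i} + #{w | G.Adj i w ∧ r w = r i} +
      #{w | G.Adj i w ∧ r i < r w} = G.degree i := by
    intro i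
    rw [← G.card_neighborFinset_eq_degree, G.neighborFinset_eq_filter, card_filter, card_filter,
      card_filter, card_filter, ← sum_add_distrib, ← sum_add_distrib]
    refine sum_congr rfl fun w _ => ?_
    by_cases hw : G.Adj i w
    · simp only [hw, true_and]
      split_ifs <;> omega
    · simp [hw]
  have hswap : ∑ i, #{w | G.Adj i w ∧ r w < r i} = ∑ i, #{w | G.Adj i w ∧ r i < r w} := by
    simp only [card_filter]
    rw [sum_comm]
    exact sum_congr rfl fun i _ => sum_congr rfl fun w _ => by rw [G.adj_comm]
  have hedges : ∑ i, c i = #G.edgeFinset := by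
    rw [level, sub_eq_zero] at hmin
    exact_mod_cast hmin
  have hdegsum := G.sum_degrees_eq_twice_card_edges
  have hle : ∑ i, G.degree i ≤ ∑ i, c i + ∑ i, #{w | G.Adj i w ∧ r w < r i} := by
    rw [← sum_add_distrib]
    exact sum_le_sum fun i _ => hdeg i
  have hsame : ∑ i, #{w | G.Adj i w ∧ r w = r i} = 0 := by
    simp only [← hsplit, sum_add_distrib] at hdegsum hle
    omega
  intro hr
  have hnone := sum_eq_zero_iff.1 hsame a (mem_univ a)
  rw [card_eq_zero, filter_eq_empty_iff] at hnone
  exact hnone (mem_univ b) ⟨hab, hr.symm⟩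

lemma isCompatiblePartition_of_rank {n : ℕ} {π : Equiv.Perm (Fin n)} {s : Fin n}
    {P : ℕ → Finset (Fin n)} (r : Fin n → ℕ) (hP : ∀ i j, i ∈ P j ↔ r i = j)
    (hP0 : P 0 = {s}) (hind : ∀ a b, (permGraph π).Adj a b → r a ≠ r b)
    (hpred : ∀ a m, r a = m + 1 → ∃ b, r b = m ∧ (permGraph π).Adj a b) :
    IsCompatiblePartition π s P (univ.sup r) := by
  have hle : ∀ i, r i ≤ univ.sup r := fun i => le_sup (mem_univ i)
  obtain ⟨t, -, ht⟩ := exists_mem_eq_sup univ ⟨s, mem_univ s⟩ r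
  have hdown : ∀ a d, ∃ b, r b = r a - d := by
    intro a d
    induction d with
    | zero => exact ⟨a, rfl⟩
    | succ d ih =>
      obtain ⟨b, hb⟩ := ih
      rcases hrb : r b with _ | m
      · exact ⟨b, by omega⟩
      · obtain ⟨b', hb', -⟩ := hpred b m hrb
        exact ⟨b', by omega⟩
  refine ⟨hP0, fun j hj => ?_, fun j hj => ?_, fun i j hij => ?_, ?_, ?_, ?_⟩
  · obtain ⟨b, hb⟩ := hdown t (r t - j)
    exact ⟨b, (hP b j).2 (by omega)⟩
  · refine eq_empty_of_forall_notMem fun i hi => ?_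
    have := hle i
    rw [hP] at hi
    omega
  · refine disjoint_left.2 fun a hai haj => ?_
    rw [hP] at hai haj
    omega
  · exact eq_univ_of_forall fun i =>
      mem_biUnion.2 ⟨r i, mem_range.2 (Nat.lt_succ_of_le (hle i)), (hP i _).2 rfl⟩
  · intro j _ a ha b hb hab
    rw [hP] at ha hb
    exact hind a b hab (ha.trans hb.symm)
  · intro j hj _ a ha
    rw [hP] at ha
    obtain ⟨b, hb, hab⟩ := hpred a (j - 1) (by omega)
    exact ⟨b, (hP b _).2 hb, hab⟩

/-- the canonical toppling of a minimal recurrent configuration on the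
permutation graph `G_π` with sink `s` is a `(π, s)`-compatible ordered partition. -/
theorem canonTop_of_minRec_isCompatible {n : ℕ} (π : Equiv.Perm (Fin n)) (s : Fin n)
    (c : Fin n → ℕ) (hrec : IsRecurrent (permGraph π) s c)
    (hmin : level (permGraph π) c = 0) :
    ∃ k : ℕ, IsCompatiblePartition π s (canonTopPart (permGraph π) s c) k := by
  obtain ⟨K, hK⟩ := exists_canonTopCum_eq_univ hrec
  exact ⟨_, isCompatiblePartition_of_rank (canonRank (permGraph π) s c)
    (fun _ _ => mem_canonTopPart_iff hK) rfl
    (fun _ _ => ne_of_adj_of_level_eq_zero hmin _ (degree_le_add_card_earlier hK hrec.1))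
    (fun _ _ => exists_adj_canonRank_eq_of_canonRank_eq_succ hK hrec.2.1)⟩
end

section
/- Every non-ambiguous binary tree on a rectangular Ferrers diagram F has exactly n dots, where n is one less than the semi-perimeter (number of rows plus number of columns) of F. Moreover, if the non-ambiguous binary tree is complete, then F has the same number of rows as columns. -/
/-- There is a dot of `D` strictly above cell `p` in its column. -/
def HasDotAbove (D : Finset (ℕ × ℕ)) (p : ℕ × ℕ) : Prop :=
  ∃ q ∈ D, q.2 = p.2 ∧ q.1 < p.1

/-- There is a dot of `D` strictly to the left of cell `p` in its row. -/
def HasDotLeft (D : Finset (ℕ × ℕ)) (p : ℕ × ℕ) : Prop :=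
  ∃ q ∈ D, q.1 = p.1 ∧ q.2 < p.2

/-- There is a dot of `D` strictly below cell `p` in its column. -/
def HasDotBelow (D : Finset (ℕ × ℕ)) (p : ℕ × ℕ) : Prop :=
  ∃ q ∈ D, q.2 = p.2 ∧ p.1 < q.1

/-- There is a dot of `D` strictly to the right of cell `p` in its row. -/
def HasDotRight (D : Finset (ℕ × ℕ)) (p : ℕ × ℕ) : Prop :=
  ∃ q ∈ D, q.1 = p.1 ∧ p.2 < q.2

/-- `D` is a non-ambiguous binary tree (NAB) on the `k × m` rectangular grid (rows
indexed `0, …, k-1` top-to-bottom, columns `0, …, m-1` left-to-right): every dot lies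
in the grid; every row and every column contains a dot; and every dot other than the
top-left cell `(0,0)` has a dot above it in its column or a dot to its left in its
row, but not both. -/
def IsNAB (k m : ℕ) (D : Finset (ℕ × ℕ)) : Prop :=
  (∀ p ∈ D, p.1 < k ∧ p.2 < m) ∧
  (∀ i, i < k → ∃ j, (i, j) ∈ D) ∧
  (∀ j, j < m → ∃ i, (i, j) ∈ D) ∧
  (∀ p ∈ D, p ≠ (0, 0) → Xor' (HasDotAbove D p) (HasDotLeft D p))

/-- A NAB is complete if every dot has either both a dot below it in its column and a
dot to its right in its row, or neither. -/
def IsCompleteNAB (D : Finset (ℕ × ℕ)) : Prop :=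
  ∀ p ∈ D, (HasDotBelow D p ↔ HasDotRight D p)

/-- a NAB on a `k × m` rectangular Ferrers diagram has exactly
`k + m - 1` dots (one less than the semi-perimeter); moreover if it is complete then
the diagram has as many rows as columns. -/
theorem nab_card_and_complete_square (k m : ℕ) (hk : 0 < k) (hm : 0 < m)
    (D : Finset (ℕ × ℕ)) (hD : IsNAB k m D) :
    D.card = k + m - 1 ∧ (IsCompleteNAB D → k = m) := by
  classical
  obtain ⟨hbound, hrow, hcol, hxor⟩ := hD
  -- a dot with a dot above it has no dot to its left
  have notLeft : ∀ p ∈ D, HasDotAbove D p → ¬ HasDotLeft D p := by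
    intro p hp hA
    have hne : p ≠ (0, 0) := by
      rintro rfl
      obtain ⟨q, _, _, hlt⟩ := hA
      exact Nat.not_lt_zero _ hlt
    rcases hxor p hp hne with ⟨_, h⟩ | ⟨_, h⟩
    · exact h
    · exact absurd hA h
  -- uniqueness lemmas
  have uniqA : ∀ p ∈ D, ∀ q ∈ D, p.2 = q.2 →
      ¬ HasDotAbove D p → ¬ HasDotAbove D q → p = q := by
    intro p hp q hq hpq hA hB
    rcases lt_trichotomy p.1 q.1 with h | h | h
    · exact absurd ⟨p, hp, hpq, h⟩ hB
    · exact Prod.ext h hpq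
    · exact absurd ⟨q, hq, hpq.symm, h⟩ hA
  have uniqL : ∀ p ∈ D, ∀ q ∈ D, p.1 = q.1 →
      ¬ HasDotLeft D p → ¬ HasDotLeft D q → p = q := by
    intro p hp q hq hpq hA hB
    rcases lt_trichotomy p.2 q.2 with h | h | h
    · exact absurd ⟨p, hp, hpq, h⟩ hB
    · exact Prod.ext hpq h
    · exact absurd ⟨q, hq, hpq.symm, h⟩ hA
  have uniqB : ∀ p ∈ D, ∀ q ∈ D, p.2 = q.2 →
      ¬ HasDotBelow D p → ¬ HasDotBelow D q → p = q := by
    intro p hp q hq hpq hA hB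
    rcases lt_trichotomy p.1 q.1 with h | h | h
    · exact absurd ⟨q, hq, hpq.symm, h⟩ hA
    · exact Prod.ext h hpq
    · exact absurd ⟨p, hp, hpq, h⟩ hB
  have uniqR : ∀ p ∈ D, ∀ q ∈ D, p.1 = q.1 →
      ¬ HasDotRight D p → ¬ HasDotRight D q → p = q := by
    intro p hp q hq hpq hA hB
    rcases lt_trichotomy p.2 q.2 with h | h | h
    · exact absurd ⟨q, hq, hpq.symm, h⟩ hA
    · exact Prod.ext hpq h
    · exact absurd ⟨p, hp, hpq, h⟩ hB
  -- existence lemmas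
  have exT : ∀ j < m, ∃ p ∈ D, p.2 = j ∧ ¬ HasDotAbove D p := by
    intro j hj
    obtain ⟨i, hi⟩ := hcol j hj
    have hne : (D.filter fun p => p.2 = j).Nonempty :=
      ⟨(i, j), Finset.mem_filter.2 ⟨hi, rfl⟩⟩
    obtain ⟨p, hp, hmin⟩ := Finset.exists_min_image _ Prod.fst hne
    rw [Finset.mem_filter] at hp
    refine ⟨p, hp.1, hp.2, ?_⟩
    rintro ⟨q, hq, hq2, hqlt⟩
    exact absurd (hmin q (Finset.mem_filter.2 ⟨hq, hq2.trans hp.2⟩)) (not_le.2 hqlt)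
  have exB : ∀ j < m, ∃ p ∈ D, p.2 = j ∧ ¬ HasDotBelow D p := by
    intro j hj
    obtain ⟨i, hi⟩ := hcol j hj
    have hne : (D.filter fun p => p.2 = j).Nonempty :=
      ⟨(i, j), Finset.mem_filter.2 ⟨hi, rfl⟩⟩
    obtain ⟨p, hp, hmax⟩ := Finset.exists_max_image _ Prod.fst hne
    rw [Finset.mem_filter] at hp
    refine ⟨p, hp.1, hp.2, ?_⟩
    rintro ⟨q, hq, hq2, hqlt⟩
    exact absurd (hmax q (Finset.mem_filter.2 ⟨hq, hq2.trans hp.2⟩)) (not_le.2 hqlt)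
  have exL : ∀ i < k, ∃ p ∈ D, p.1 = i ∧ ¬ HasDotLeft D p := by
    intro i hi
    obtain ⟨j, hj⟩ := hrow i hi
    have hne : (D.filter fun p => p.1 = i).Nonempty :=
      ⟨(i, j), Finset.mem_filter.2 ⟨hj, rfl⟩⟩
    obtain ⟨p, hp, hmin⟩ := Finset.exists_min_image _ Prod.snd hne
    rw [Finset.mem_filter] at hp
    refine ⟨p, hp.1, hp.2, ?_⟩
    rintro ⟨q, hq, hq1, hqlt⟩
    exact absurd (hmin q (Finset.mem_filter.2 ⟨hq, hq1.trans hp.2⟩)) (not_le.2 hqlt)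
  have exR : ∀ i < k, ∃ p ∈ D, p.1 = i ∧ ¬ HasDotRight D p := by
    intro i hi
    obtain ⟨j, hj⟩ := hrow i hi
    have hne : (D.filter fun p => p.1 = i).Nonempty :=
      ⟨(i, j), Finset.mem_filter.2 ⟨hj, rfl⟩⟩
    obtain ⟨p, hp, hmax⟩ := Finset.exists_max_image _ Prod.snd hne
    rw [Finset.mem_filter] at hp
    refine ⟨p, hp.1, hp.2, ?_⟩
    rintro ⟨q, hq, hq1, hqlt⟩
    exact absurd (hmax q (Finset.mem_filter.2 ⟨hq, hq1.trans hp.2⟩)) (not_le.2 hqlt)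
  -- card of topmost dots = m
  have hTcard : (D.filter fun p => ¬ HasDotAbove D p).card = m := by
    rw [← Finset.card_range m]
    apply Finset.card_bij (fun p _ => p.2)
    · intro p hp
      rw [Finset.mem_filter] at hp
      exact Finset.mem_range.2 (hbound p hp.1).2
    · intro p hp q hq h
      rw [Finset.mem_filter] at hp hq
      exact uniqA p hp.1 q hq.1 h hp.2 hq.2
    · intro j hj
      obtain ⟨p, hp, hpj, hA⟩ := exT j (Finset.mem_range.1 hj)
      exact ⟨p, Finset.mem_filter.2 ⟨hp, hA⟩, hpj⟩
  -- card of dots with a dot above = k - 1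
  have hLcard : (D.filter fun p => HasDotAbove D p).card = k - 1 := by
    have : (Finset.Ico 1 k).card = k - 1 := by rw [Nat.card_Ico]
    rw [← this]
    apply Finset.card_bij (fun p _ => p.1)
    · intro p hp
      rw [Finset.mem_filter] at hp
      obtain ⟨q, _, _, hlt⟩ := hp.2
      exact Finset.mem_Ico.2 ⟨Nat.one_le_iff_ne_zero.2 (Nat.pos_of_ne_zero fun h => by omega).ne',
        (hbound p hp.1).1⟩
    · intro p hp q hq h
      rw [Finset.mem_filter] at hp hq
      exact uniqL p hp.1 q hq.1 h (notLeft p hp.1 hp.2) (notLeft q hq.1 hq.2)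
    · intro i hi
      rw [Finset.mem_Ico] at hi
      obtain ⟨p, hp, hpi, hL⟩ := exL i hi.2
      have hne : p ≠ (0, 0) := by
        intro h
        rw [h] at hpi
        omega
      have hA : HasDotAbove D p := by
        rcases hxor p hp hne with ⟨h, _⟩ | ⟨h, _⟩
        · exact h
        · exact absurd h hL
      exact ⟨p, Finset.mem_filter.2 ⟨hp, hA⟩, hpi⟩
  -- card of bottommost dots = m
  have hBcard : (D.filter fun p => ¬ HasDotBelow D p).card = m := by
    rw [← Finset.card_range m]
    apply Finset.card_bij (fun p _ => p.2)
    · intro p hp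
      rw [Finset.mem_filter] at hp
      exact Finset.mem_range.2 (hbound p hp.1).2
    · intro p hp q hq h
      rw [Finset.mem_filter] at hp hq
      exact uniqB p hp.1 q hq.1 h hp.2 hq.2
    · intro j hj
      obtain ⟨p, hp, hpj, hB⟩ := exB j (Finset.mem_range.1 hj)
      exact ⟨p, Finset.mem_filter.2 ⟨hp, hB⟩, hpj⟩
  -- card of rightmost dots = k
  have hRcard : (D.filter fun p => ¬ HasDotRight D p).card = k := by
    rw [← Finset.card_range k]
    apply Finset.card_bij (fun p _ => p.1)
    · intro p hp
      rw [Finset.mem_filter] at hp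
      exact Finset.mem_range.2 (hbound p hp.1).1
    · intro p hp q hq h
      rw [Finset.mem_filter] at hp hq
      exact uniqR p hp.1 q hq.1 h hp.2 hq.2
    · intro i hi
      obtain ⟨p, hp, hpi, hR⟩ := exR i (Finset.mem_range.1 hi)
      exact ⟨p, Finset.mem_filter.2 ⟨hp, hR⟩, hpi⟩
  constructor
  · have hsplit := Finset.card_filter_add_card_filter_not
      (s := D) (p := fun p => HasDotAbove D p)
    omega
  · intro hc
    have heq : (D.filter fun p => ¬ HasDotBelow D p)
        = (D.filter fun p => ¬ HasDotRight D p) :=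
      Finset.filter_congr fun p hp => not_congr (hc p hp)
    rw [heq, hRcard] at hBcard
    omega
end

section
/- The map ζ, which sends a complete multirooted non-ambiguous binary tree M ∈ M_π to the subgraph of G_π with edge set {(i, π_j) : cell (i,j) contains an internal dot of M}, is a bijection from M_π to the set of spanning trees of G_π. -/
open Finset
open scoped Classical

/-- The leaf dots of the grid `T_π`: a dot in cell `(π t, t)` for every `t`. -/
def leafDots {n : ℕ} (π : Equiv.Perm (Fin n)) : Finset (Fin n × Fin n) :=
  Finset.univ.image (fun t => (π t, t))

/-- `q` is the nearest dot of `D` above `p` in its column, or the nearest dot of `D`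
to the left of `p` in its row. -/
def dotRel {n : ℕ} (D : Finset (Fin n × Fin n)) (p q : Fin n × Fin n) : Prop :=
  p ∈ D ∧ q ∈ D ∧
    ((p.2 = q.2 ∧ q.1 < p.1 ∧ ∀ x ∈ D, x.2 = p.2 → q.1 < x.1 → p.1 ≤ x.1) ∨
     (p.1 = q.1 ∧ q.2 < p.2 ∧ ∀ x ∈ D, x.1 = p.1 → q.2 < x.2 → p.2 ≤ x.2))

/-- The graph on the dots of `D`: each dot is connected to the nearest dot above it
(in its column) and the nearest dot to its left (in its row), when these exist. -/
def dotGraph {n : ℕ} (D : Finset (Fin n × Fin n)) : SimpleGraph (Fin n × Fin n) :=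
  SimpleGraph.fromRel (dotRel D)

/-- `D` is a complete multirooted non-ambiguous binary tree (CMNAB) on `T_π`: it is
obtained from the leaf dots of `T_π` by adding `n - 1` internal dots, each having a
dot below it in its column and a dot to its right in its row, such that the induced
graph on the dots is a tree. -/
def IsCMNAB {n : ℕ} (π : Equiv.Perm (Fin n)) (D : Finset (Fin n × Fin n)) : Prop :=
  leafDots π ⊆ D ∧
  D.card = 2 * n - 1 ∧
  (∀ p ∈ D, p ∉ leafDots π →
    (∃ q ∈ D, q.2 = p.2 ∧ p.1 < q.1) ∧ (∃ q ∈ D, q.1 = p.1 ∧ p.2 < q.2)) ∧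
  (SimpleGraph.induce (↑D : Set (Fin n × Fin n)) (dotGraph D)).IsTree

/-- The map `ζ`: the subgraph of `G_π` whose edges `(a, π j)` correspond to the
internal dots `(a, j)` of `D`. -/
def zeta {n : ℕ} (π : Equiv.Perm (Fin n)) (D : Finset (Fin n × Fin n)) :
    SimpleGraph (Fin n) :=
  SimpleGraph.fromRel
    (fun a b => ∃ j : Fin n, (a, j) ∈ D ∧ (a, j) ∉ leafDots π ∧ b = π j)

namespace ZetaAux
open SimpleGraph

lemma ncard_edgeSet {V : Type*} [Fintype V] (G : SimpleGraph V) [Fintype G.edgeSet] :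
    G.edgeSet.ncard = G.edgeFinset.card := by
  rw [edgeFinset, Set.ncard_eq_toFinset_card']

lemma reachable_of_adj_imp {V W : Type*} {G : SimpleGraph V} {H : SimpleGraph W} (f : V → W)
    (h : ∀ a b, G.Adj a b → H.Reachable (f a) (f b)) {u v : V} (hr : G.Reachable u v) :
    H.Reachable (f u) (f v) := by
  obtain ⟨w⟩ := hr
  induction w with
  | nil => exact Reachable.refl _
  | cons ha _ ih => exact (h _ _ ha).trans ih

lemma connected_delete {V : Type*} (G : SimpleGraph V) {v w : V} (hc : G.Connected)
    (hr : (G \ fromEdgeSet {s(v,w)}).Reachable v w) :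
    (G \ fromEdgeSet {s(v,w)}).Connected := by
  rw [connected_iff] at hc ⊢
  refine ⟨fun a b => ?_, hc.2⟩
  refine reachable_of_adj_imp id ?_ (hc.1 a b)
  intro x y hxy
  by_cases hxy' : s(x,y) = s(v,w)
  · rcases Sym2.eq_iff.1 hxy' with ⟨rfl, rfl⟩ | ⟨rfl, rfl⟩
    · exact hr
    · exact hr.symm
  · refine Adj.reachable ?_
    simp only [sdiff_adj, fromEdgeSet_adj, Set.mem_singleton_iff]
    exact ⟨hxy, fun h' => hxy' h'.1⟩

lemma exists_delete {V : Type*} [Fintype V] (G : SimpleGraph V) (hc : G.Connected)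
    (ha : ¬ G.IsAcyclic) :
    ∃ G' : SimpleGraph V, G'.Connected ∧ G'.edgeSet.ncard < G.edgeSet.ncard := by
  simp only [IsAcyclic] at ha
  push_neg at ha
  obtain ⟨u, c, hcyc⟩ := ha
  have hlen : c.edges ≠ [] := by
    have h3 := hcyc.three_le_length
    intro h
    have := c.length_edges
    rw [h] at this
    simp at this
    omega
  obtain ⟨e, he⟩ := List.exists_mem_of_ne_nil _ hlen
  induction e with
  | h x y =>
    have hadj : G.Adj x y := c.adj_of_mem_edges he
    have hreach : (G \ fromEdgeSet {s(x,y)}).Reachable x y :=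
      (adj_and_reachable_delete_edges_iff_exists_cycle.2 ⟨u, c, hcyc, he⟩).2
    refine ⟨G \ fromEdgeSet {s(x,y)}, connected_delete G hc hreach, ?_⟩
    have hE : (G \ fromEdgeSet {s(x,y)}).edgeSet = G.edgeSet \ {s(x,y)} := by
      rw [edgeSet_sdiff, edgeSet_fromEdgeSet, edgeSet_sdiff_sdiff_isDiag]
    rw [hE]
    refine Set.ncard_lt_ncard ?_ (Set.toFinite _)
    constructor
    · exact Set.diff_subset
    · intro hsub
      exact (hsub hadj).2 rfl

lemma card_le_of_connected {V : Type*} [Fintype V] :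
    ∀ (k : ℕ) (G : SimpleGraph V), G.edgeSet.ncard = k → G.Connected →
      Fintype.card V ≤ k + 1 := by
  intro k
  induction k using Nat.strong_induction_on with
  | _ k ih =>
    intro G hk hc
    by_cases ha : G.IsAcyclic
    · have ht : G.IsTree := ⟨hc, ha⟩
      have := ht.card_edgeFinset
      rw [← ncard_edgeSet] at this
      omega
    · obtain ⟨G', hG'c, hG'⟩ := exists_delete G hc ha
      have := ih _ (hk ▸ hG') G' rfl hG'c
      omega

lemma isTree_of_connected_of_card {V : Type*} [Fintype V] (G : SimpleGraph V)
    (hc : G.Connected) (hcard : G.edgeSet.ncard + 1 = Fintype.card V) : G.IsTree := by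
  refine ⟨hc, ?_⟩
  by_contra ha
  obtain ⟨G', hG'c, hG'⟩ := exists_delete G hc ha
  have := card_le_of_connected G'.edgeSet.ncard G' rfl hG'c
  omega

end ZetaAux

namespace ZetaAux
open SimpleGraph

variable {n : ℕ} (π : Equiv.Perm (Fin n)) (D : Finset (Fin n × Fin n))

lemma mem_leafDots {p : Fin n × Fin n} : p ∈ leafDots π ↔ p.1 = π p.2 := by
  constructor
  · intro h
    simp only [leafDots, Finset.mem_image, Finset.mem_univ, true_and] at h
    obtain ⟨t, ht⟩ := h
    rw [← ht]
  · intro h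
    simp only [leafDots, Finset.mem_image, Finset.mem_univ, true_and]
    exact ⟨p.2, by rw [← h]⟩

lemma leaf_mem (a : Fin n) : (a, π.symm a) ∈ leafDots π := by
  rw [mem_leafDots]; simp

lemma card_leafDots : (leafDots π).card = n := by
  rw [leafDots, Finset.card_image_of_injective _ (fun a b h => by
    simpa using congrArg Prod.snd h)]
  simp

variable {π D}

section Bounds

variable (hL : leafDots π ⊆ D)
  (hInt : ∀ p ∈ D, p ∉ leafDots π →
    (∃ q ∈ D, q.2 = p.2 ∧ p.1 < q.1) ∧ (∃ q ∈ D, q.1 = p.1 ∧ p.2 < q.2))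

include hL hInt

lemma row_le {p : Fin n × Fin n} (hp : p ∈ D) : p.1 ≤ π p.2 := by
  have hne : (D.filter (fun x => x.2 = p.2)).Nonempty := ⟨p, by simp [hp]⟩
  obtain ⟨q, hq, hqmax⟩ := Finset.exists_max_image _ (fun x => x.1) hne
  simp only [Finset.mem_filter] at hq
  have hqleaf : q ∈ leafDots π := by
    by_contra hql
    obtain ⟨⟨r, hr, hr2, hlt⟩, -⟩ := hInt q hq.1 hql
    have := hqmax r (by simp [hr, hr2, hq.2])
    omega
  have h1 : q.1 = π p.2 := by rw [(mem_leafDots π).1 hqleaf, hq.2]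
  have := hqmax p (by simp [hp])
  omega

lemma col_le {p : Fin n × Fin n} (hp : p ∈ D) : p.2 ≤ π.symm p.1 := by
  have hne : (D.filter (fun x => x.1 = p.1)).Nonempty := ⟨p, by simp [hp]⟩
  obtain ⟨q, hq, hqmax⟩ := Finset.exists_max_image _ (fun x => x.2) hne
  simp only [Finset.mem_filter] at hq
  have hqleaf : q ∈ leafDots π := by
    by_contra hql
    obtain ⟨-, ⟨r, hr, hr2, hlt⟩⟩ := hInt q hq.1 hql
    have := hqmax r (by simp [hr, hr2, hq.2])
    omega
  have h1 : q.2 = π.symm p.1 := by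
    have := (mem_leafDots π).1 hqleaf
    rw [hq.2] at this
    rw [this]
    simp
  have := hqmax p (by simp [hp])
  omega

lemma internal_lt {p : Fin n × Fin n} (hp : p ∈ D) (hpl : p ∉ leafDots π) :
    p.1 < π p.2 ∧ p.2 < π.symm p.1 := by
  have h1 := row_le hL hInt hp
  have h2 := col_le hL hInt hp
  have hne : p.1 ≠ π p.2 := fun h => hpl ((mem_leafDots π).2 h)
  have hne2 : p.2 ≠ π.symm p.1 := by
    intro h
    exact hpl ((mem_leafDots π).2 (by rw [h]; simp))
  exact ⟨lt_of_le_of_ne h1 hne, lt_of_le_of_ne h2 hne2⟩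

end Bounds

lemma zeta_adj {a b : Fin n} : (zeta π D).Adj a b ↔ a ≠ b ∧
    (((a, π.symm b) ∈ D ∧ (a, π.symm b) ∉ leafDots π) ∨
     ((b, π.symm a) ∈ D ∧ (b, π.symm a) ∉ leafDots π)) := by
  rw [zeta, fromRel_adj]
  refine and_congr_right fun _ => or_congr ?_ ?_ <;>
  · constructor
    · rintro ⟨j, h1, h2, rfl⟩
      simpa using ⟨h1, h2⟩
    · rintro ⟨h1, h2⟩
      exact ⟨_, h1, h2, by simp⟩

/-- the edge associated to an internal dot -/
def g (π : Equiv.Perm (Fin n)) (p : Fin n × Fin n) : Sym2 (Fin n) := s(p.1, π p.2)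

lemma g_inj' {p q : Fin n × Fin n} (hp : p.1 < π p.2) (hq : q.1 < π q.2)
    (h : g π p = g π q) : p = q := by
  rw [g, g, Sym2.eq_iff] at h
  rcases h with ⟨h1, h2⟩ | ⟨h1, h2⟩
  · exact Prod.ext h1 (π.injective h2)
  · rw [h1, h2] at hp
    omega

section Forward

variable (hL : leafDots π ⊆ D)
  (hInt : ∀ p ∈ D, p ∉ leafDots π →
    (∃ q ∈ D, q.2 = p.2 ∧ p.1 < q.1) ∧ (∃ q ∈ D, q.1 = p.1 ∧ p.2 < q.2))

include hL hInt

lemma zeta_le : zeta π D ≤ permGraph π := by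
  intro a b hab
  rw [zeta_adj] at hab
  obtain ⟨hne, h | h⟩ := hab
  · obtain ⟨h1, h2⟩ := internal_lt hL hInt h.1 h.2
    simp only at h1 h2
    rw [Equiv.apply_symm_apply] at h1
    rw [permGraph, fromRel_adj]
    exact ⟨hne, Or.inl ⟨h1, h2⟩⟩
  · obtain ⟨h1, h2⟩ := internal_lt hL hInt h.1 h.2
    simp only at h1 h2
    rw [Equiv.apply_symm_apply] at h1
    rw [permGraph, fromRel_adj]
    exact ⟨hne, Or.inr ⟨h1, h2⟩⟩

lemma zeta_edgeSet :
    (zeta π D).edgeSet = ↑((D.filter (fun p => p ∉ leafDots π)).image (g π)) := by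
  ext e
  induction e with
  | h a b =>
    simp only [mem_edgeSet, Finset.coe_image, Set.mem_image, Finset.mem_coe,
      Finset.mem_filter]
    rw [zeta_adj]
    constructor
    · rintro ⟨hne, h | h⟩
      · exact ⟨(a, π.symm b), ⟨h.1, h.2⟩, by simp [g]⟩
      · refine ⟨(b, π.symm a), ⟨h.1, h.2⟩, ?_⟩
        simp [g, Sym2.eq_swap]
    · rintro ⟨p, ⟨hp, hpl⟩, hpe⟩
      have hlt := (internal_lt hL hInt hp hpl).1
      rw [g, Sym2.eq_iff] at hpe
      rcases hpe with ⟨h1, h2⟩ | ⟨h1, h2⟩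
      · refine ⟨?_, Or.inl ⟨by rwa [← h1, ← h2, Equiv.symm_apply_apply], by
          rwa [← h1, ← h2, Equiv.symm_apply_apply]⟩⟩
        rw [← h1, ← h2]; exact hlt.ne
      · refine ⟨?_, Or.inr ⟨by rwa [← h1, ← h2, Equiv.symm_apply_apply], by
          rwa [← h1, ← h2, Equiv.symm_apply_apply]⟩⟩
        rw [← h1, ← h2]; exact (hlt.ne).symm

lemma zeta_edge_ncard (hcard : D.card = 2 * n - 1) :
    (zeta π D).edgeSet.ncard = n - 1 := by
  rw [zeta_edgeSet hL hInt, Set.ncard_coe_finset]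
  have hinj : Set.InjOn (g π) ↑(D.filter (fun p => p ∉ leafDots π)) := by
    intro p hp q hq h
    simp only [Finset.coe_filter, Set.mem_setOf_eq] at hp hq
    exact g_inj' (internal_lt hL hInt hp.1 hp.2).1 (internal_lt hL hInt hq.1 hq.2).1 h
  rw [Finset.card_image_of_injOn hinj]
  have : D.filter (fun p => p ∉ leafDots π) = D \ leafDots π := by
    rw [Finset.sdiff_eq_filter]
  rw [this, Finset.card_sdiff_of_subset hL, card_leafDots, hcard]
  omega

end Forward

section Forward2

variable (hL : leafDots π ⊆ D)
  (hInt : ∀ p ∈ D, p ∉ leafDots π →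
    (∃ q ∈ D, q.2 = p.2 ∧ p.1 < q.1) ∧ (∃ q ∈ D, q.1 = p.1 ∧ p.2 < q.2))

include hL hInt

lemma reach_leafcol {x c : Fin n} (h : (x, c) ∈ D) : (zeta π D).Reachable x (π c) := by
  by_cases hx : x = π c
  · rw [hx]
  · refine Adj.reachable ?_
    rw [zeta, fromRel_adj]
    exact ⟨hx, Or.inl ⟨c, h, fun hl => hx ((mem_leafDots π).1 hl), rfl⟩⟩

lemma ind_adj_imp {p q : ↥(↑D : Set (Fin n × Fin n))}
    (h : (SimpleGraph.induce (↑D : Set (Fin n × Fin n)) (dotGraph D)).Adj p q) :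
    (zeta π D).Reachable p.1.1 q.1.1 := by
  have h' : (dotGraph D).Adj p.1 q.1 := h
  rw [dotGraph, fromRel_adj] at h'
  obtain ⟨hne, hrel | hrel⟩ := h'
  · obtain ⟨hp, hq, ⟨hcol, -, -⟩ | ⟨hrow, -, -⟩⟩ := hrel
    · have r1 := reach_leafcol hL hInt (x := p.1.1) (c := p.1.2) (by simpa using hp)
      have r2 := reach_leafcol hL hInt (x := q.1.1) (c := q.1.2) (by simpa using hq)
      rw [hcol] at r1
      exact r1.trans r2.symm
    · rw [hrow]
  · obtain ⟨hq, hp, ⟨hcol, -, -⟩ | ⟨hrow, -, -⟩⟩ := hrel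
    · have r1 := reach_leafcol hL hInt (x := p.1.1) (c := p.1.2) (by simpa using hp)
      have r2 := reach_leafcol hL hInt (x := q.1.1) (c := q.1.2) (by simpa using hq)
      rw [hcol] at r2
      exact r1.trans r2.symm
    · rw [← hrow]

lemma zeta_connected
    (htree : (SimpleGraph.induce (↑D : Set (Fin n × Fin n)) (dotGraph D)).IsTree) :
    (zeta π D).Connected := by
  have hconn := htree.1
  have hne : Nonempty (Fin n) := by
    obtain ⟨⟨p, hp⟩⟩ := hconn.nonempty
    exact ⟨p.1⟩
  rw [connected_iff]
  refine ⟨fun a b => ?_, hne⟩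
  have pa : ↥(↑D : Set (Fin n × Fin n)) := ⟨(a, π.symm a), hL (leaf_mem π a)⟩
  have hr := hconn.preconnected ⟨(a, π.symm a), hL (leaf_mem π a)⟩
    ⟨(b, π.symm b), hL (leaf_mem π b)⟩
  exact reachable_of_adj_imp (fun p => p.1.1) (fun p q h => ind_adj_imp hL hInt h) hr

end Forward2

lemma forward_mapsTo (hD : IsCMNAB π D) :
    zeta π D ≤ permGraph π ∧ (zeta π D).IsTree := by
  obtain ⟨hL, hcard, hInt, htree⟩ := hD
  have hconn := zeta_connected hL hInt htree
  refine ⟨zeta_le hL hInt, isTree_of_connected_of_card _ hconn ?_⟩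
  rw [zeta_edge_ncard hL hInt hcard, Fintype.card_fin]
  have : Nonempty (Fin n) := hconn.nonempty
  have : 0 < n := Fin.pos_iff_nonempty.2 this
  omega

lemma zeta_injOn {D1 D2 : Finset (Fin n × Fin n)} (h1 : IsCMNAB π D1) (h2 : IsCMNAB π D2)
    (heq : zeta π D1 = zeta π D2) : D1 = D2 := by
  obtain ⟨hL1, -, hInt1, -⟩ := h1
  obtain ⟨hL2, -, hInt2, -⟩ := h2
  have hE : (↑((D1.filter (fun p => p ∉ leafDots π)).image (g π)) : Set (Sym2 (Fin n)))
      = ↑((D2.filter (fun p => p ∉ leafDots π)).image (g π)) := by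
    rw [← zeta_edgeSet hL1 hInt1, ← zeta_edgeSet hL2 hInt2, heq]
  have hE' := Finset.coe_injective hE
  have hII : D1.filter (fun p => p ∉ leafDots π) = D2.filter (fun p => p ∉ leafDots π) := by
    apply Finset.ext
    intro p
    constructor
    · intro hp
      have : g π p ∈ (D2.filter (fun p => p ∉ leafDots π)).image (g π) := by
        rw [← hE']
        exact Finset.mem_image_of_mem _ hp
      obtain ⟨q, hq, hgq⟩ := Finset.mem_image.1 this
      rw [Finset.mem_filter] at hp hq
      have := g_inj' (internal_lt hL2 hInt2 hq.1 hq.2).1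
        (internal_lt hL1 hInt1 hp.1 hp.2).1 hgq
      rw [this] at hq
      exact Finset.mem_filter.2 hq
      
    · intro hp
      have : g π p ∈ (D1.filter (fun p => p ∉ leafDots π)).image (g π) := by
        rw [hE']
        exact Finset.mem_image_of_mem _ hp
      obtain ⟨q, hq, hgq⟩ := Finset.mem_image.1 this
      rw [Finset.mem_filter] at hp hq
      have := g_inj' (internal_lt hL1 hInt1 hq.1 hq.2).1
        (internal_lt hL2 hInt2 hp.1 hp.2).1 hgq
      rw [this] at hq
      exact Finset.mem_filter.2 hq
  have key : ∀ (E : Finset (Fin n × Fin n)), leafDots π ⊆ E →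
      E = leafDots π ∪ E.filter (fun p => p ∉ leafDots π) := by
    intro E hLE
    rw [← Finset.sdiff_eq_filter, Finset.union_sdiff_of_subset hLE]
  rw [key D1 hL1, key D2 hL2, hII]

/-- vertical relation: `q` is the nearest dot above `p` -/
def VRel (D : Finset (Fin n × Fin n)) (p q : Fin n × Fin n) : Prop :=
  p ∈ D ∧ q ∈ D ∧ p.2 = q.2 ∧ q.1 < p.1 ∧ ∀ x ∈ D, x.2 = p.2 → q.1 < x.1 → p.1 ≤ x.1

/-- horizontal relation: `q` is the nearest dot to the left of `p` -/
def HRel (D : Finset (Fin n × Fin n)) (p q : Fin n × Fin n) : Prop :=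
  p ∈ D ∧ q ∈ D ∧ p.1 = q.1 ∧ q.2 < p.2 ∧ ∀ x ∈ D, x.1 = p.1 → q.2 < x.2 → p.2 ≤ x.2

lemma dotRel_iff {p q : Fin n × Fin n} :
    dotRel D p q ↔ VRel D p q ∨ HRel D p q := by
  unfold dotRel VRel HRel
  tauto

lemma VRel_unique {p q q' : Fin n × Fin n} (h : VRel D p q) (h' : VRel D p q') : q = q' := by
  obtain ⟨hp, hq, hc, hlt, hmin⟩ := h
  obtain ⟨-, hq', hc', hlt', hmin'⟩ := h'
  have h1 : q.1 = q'.1 := by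
    rcases lt_trichotomy q.1 q'.1 with h | h | h
    · have := hmin q' hq' hc'.symm h
      omega
    · exact h
    · have := hmin' q hq hc.symm h
      omega
  have h2 : q.2 = q'.2 := by rw [← hc, ← hc']
  exact Prod.ext h1 h2

lemma HRel_unique {p q q' : Fin n × Fin n} (h : HRel D p q) (h' : HRel D p q') : q = q' := by
  obtain ⟨hp, hq, hc, hlt, hmin⟩ := h
  obtain ⟨-, hq', hc', hlt', hmin'⟩ := h'
  have h2 : q.2 = q'.2 := by
    rcases lt_trichotomy q.2 q'.2 with h | h | h
    · have := hmin q' hq' hc'.symm h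
      omega
    · exact h
    · have := hmin' q hq hc.symm h
      omega
  have h1 : q.1 = q'.1 := by rw [← hc, ← hc']
  exact Prod.ext h1 h2

lemma exists_VRel {p x : Fin n × Fin n} (hp : p ∈ D) (hx : x ∈ D) (hx2 : x.2 = p.2)
    (hx1 : x.1 < p.1) :
    ∃ r, VRel D p r ∧ ∀ y ∈ D, y.2 = p.2 → y.1 < p.1 → y.1 ≤ r.1 := by
  have hne : (D.filter (fun y => y.2 = p.2 ∧ y.1 < p.1)).Nonempty :=
    ⟨x, Finset.mem_filter.2 ⟨hx, hx2, hx1⟩⟩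
  obtain ⟨r, hr, hrmax⟩ := Finset.exists_max_image _ (fun y => y.1) hne
  rw [Finset.mem_filter] at hr
  refine ⟨r, ⟨hp, hr.1, hr.2.1.symm, hr.2.2, ?_⟩, ?_⟩
  · intro y hy hy2 hy1
    by_contra hcon
    push_neg at hcon
    have := hrmax y (Finset.mem_filter.2 ⟨hy, hy2, hcon⟩)
    omega
  · intro y hy hy2 hy1
    exact hrmax y (Finset.mem_filter.2 ⟨hy, hy2, hy1⟩)

lemma exists_HRel {p x : Fin n × Fin n} (hp : p ∈ D) (hx : x ∈ D) (hx1 : x.1 = p.1)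
    (hx2 : x.2 < p.2) :
    ∃ r, HRel D p r ∧ ∀ y ∈ D, y.1 = p.1 → y.2 < p.2 → y.2 ≤ r.2 := by
  have hne : (D.filter (fun y => y.1 = p.1 ∧ y.2 < p.2)).Nonempty :=
    ⟨x, Finset.mem_filter.2 ⟨hx, hx1, hx2⟩⟩
  obtain ⟨r, hr, hrmax⟩ := Finset.exists_max_image _ (fun y => y.2) hne
  rw [Finset.mem_filter] at hr
  refine ⟨r, ⟨hp, hr.1, hr.2.1.symm, hr.2.2, ?_⟩, ?_⟩
  · intro y hy hy2 hy1
    by_contra hcon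
    push_neg at hcon
    have := hrmax y (Finset.mem_filter.2 ⟨hy, hy2, hcon⟩)
    omega
  · intro y hy hy2 hy1
    exact hrmax y (Finset.mem_filter.2 ⟨hy, hy2, hy1⟩)

lemma VRel_adj {p q : Fin n × Fin n} (h : VRel D p q) :
    (SimpleGraph.induce (↑D : Set (Fin n × Fin n)) (dotGraph D)).Adj ⟨p, h.1⟩ ⟨q, h.2.1⟩ := by
  have : (dotGraph D).Adj p q := by
    rw [dotGraph, fromRel_adj]
    refine ⟨?_, Or.inl (dotRel_iff.2 (Or.inl h))⟩
    intro hpq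
    have := h.2.2.2.1
    rw [hpq] at this
    omega
  exact this

lemma HRel_adj {p q : Fin n × Fin n} (h : HRel D p q) :
    (SimpleGraph.induce (↑D : Set (Fin n × Fin n)) (dotGraph D)).Adj ⟨p, h.1⟩ ⟨q, h.2.1⟩ := by
  have : (dotGraph D).Adj p q := by
    rw [dotGraph, fromRel_adj]
    refine ⟨?_, Or.inl (dotRel_iff.2 (Or.inr h))⟩
    intro hpq
    have := h.2.2.2.1
    rw [hpq] at this
    omega
  exact this

lemma reach_col_aux :
    ∀ (m : ℕ) (p q : Fin n × Fin n) (hp : p ∈ D) (hq : q ∈ D), p.2 = q.2 → q.1 ≤ p.1 →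
      p.1.val = m →
      (SimpleGraph.induce (↑D : Set (Fin n × Fin n)) (dotGraph D)).Reachable ⟨p, hp⟩ ⟨q, hq⟩ := by
  intro m
  induction m using Nat.strong_induction_on with
  | _ m ih =>
    intro p q hp hq hcol hle hm
    by_cases heq : q.1 = p.1
    · have hpq : p = q := Prod.ext heq.symm hcol
      rw [show (⟨p, hp⟩ : ↥(↑D : Set (Fin n × Fin n))) = ⟨q, hq⟩ from Subtype.ext hpq]
    · have hlt : q.1 < p.1 := lt_of_le_of_ne hle heq
      obtain ⟨r, hr, hrmax⟩ := exists_VRel hp hq hcol.symm hlt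
      refine (VRel_adj hr).reachable.trans (ih r.1.val ?_ r q hr.2.1 hq ?_ ?_ rfl)
      · have := hr.2.2.2.1
        omega
      · rw [← hr.2.2.1, hcol]
      · exact hrmax q hq hcol.symm hlt

lemma reach_col {p q : Fin n × Fin n} (hp : p ∈ D) (hq : q ∈ D) (h2 : p.2 = q.2) :
    (SimpleGraph.induce (↑D : Set (Fin n × Fin n)) (dotGraph D)).Reachable ⟨p, hp⟩ ⟨q, hq⟩ := by
  rcases le_total q.1 p.1 with h | h
  · exact reach_col_aux p.1.val p q hp hq h2 h rfl
  · exact (reach_col_aux q.1.val q p hq hp h2.symm h rfl).symm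

lemma reach_row_aux :
    ∀ (m : ℕ) (p q : Fin n × Fin n) (hp : p ∈ D) (hq : q ∈ D), p.1 = q.1 → q.2 ≤ p.2 →
      p.2.val = m →
      (SimpleGraph.induce (↑D : Set (Fin n × Fin n)) (dotGraph D)).Reachable ⟨p, hp⟩ ⟨q, hq⟩ := by
  intro m
  induction m using Nat.strong_induction_on with
  | _ m ih =>
    intro p q hp hq hrow hle hm
    by_cases heq : q.2 = p.2
    · have hpq : p = q := Prod.ext hrow heq.symm
      rw [show (⟨p, hp⟩ : ↥(↑D : Set (Fin n × Fin n))) = ⟨q, hq⟩ from Subtype.ext hpq]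
    · have hlt : q.2 < p.2 := lt_of_le_of_ne hle heq
      obtain ⟨r, hr, hrmax⟩ := exists_HRel hp hq hrow.symm hlt
      refine (HRel_adj hr).reachable.trans (ih r.2.val ?_ r q hr.2.1 hq ?_ ?_ rfl)
      · have := hr.2.2.2.1
        omega
      · rw [← hr.2.2.1, hrow]
      · exact hrmax q hq hrow.symm hlt

lemma reach_row {p q : Fin n × Fin n} (hp : p ∈ D) (hq : q ∈ D) (h1 : p.1 = q.1) :
    (SimpleGraph.induce (↑D : Set (Fin n × Fin n)) (dotGraph D)).Reachable ⟨p, hp⟩ ⟨q, hq⟩ := by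
  rcases le_total q.2 p.2 with h | h
  · exact reach_row_aux p.2.val p q hp hq h1 h rfl
  · exact (reach_row_aux q.2.val q p hq hp h1.symm h rfl).symm

noncomputable def nav (D : Finset (Fin n × Fin n)) (p : Fin n × Fin n) : Fin n × Fin n :=
  if h : ∃ q, VRel D p q then h.choose else p

noncomputable def nah (D : Finset (Fin n × Fin n)) (p : Fin n × Fin n) : Fin n × Fin n :=
  if h : ∃ q, HRel D p q then h.choose else p

lemma nav_spec {p : Fin n × Fin n} (h : ∃ q, VRel D p q) : VRel D p (nav D p) := by
  rw [nav, dif_pos h]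
  exact h.choose_spec

lemma nah_spec {p : Fin n × Fin n} (h : ∃ q, HRel D p q) : HRel D p (nah D p) := by
  rw [nah, dif_pos h]
  exact h.choose_spec

lemma nav_eq {p q : Fin n × Fin n} (h : VRel D p q) : nav D p = q :=
  VRel_unique (nav_spec ⟨q, h⟩) h

lemma nah_eq {p q : Fin n × Fin n} (h : HRel D p q) : nah D p = q :=
  HRel_unique (nah_spec ⟨q, h⟩) h

lemma VRel_adj' {p q : Fin n × Fin n} (h : VRel D p q) : (dotGraph D).Adj p q := by
  rw [dotGraph, fromRel_adj]
  refine ⟨?_, Or.inl (dotRel_iff.2 (Or.inl h))⟩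
  intro hpq
  have := h.2.2.2.1
  rw [hpq] at this
  omega

lemma HRel_adj' {p q : Fin n × Fin n} (h : HRel D p q) : (dotGraph D).Adj p q := by
  rw [dotGraph, fromRel_adj]
  refine ⟨?_, Or.inl (dotRel_iff.2 (Or.inr h))⟩
  intro hpq
  have := h.2.2.2.1
  rw [hpq] at this
  omega

variable (π D) in
lemma card_no_above (hL : leafDots π ⊆ D) :
    (D.filter (fun p => ¬ ∃ x ∈ D, x.2 = p.2 ∧ x.1 < p.1)).card = n := by
  refine Eq.trans (Finset.card_bij (fun p _ => p.2) (fun a ha => Finset.mem_univ _) ?_ ?_)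
    (by simp)
  · intro a ha a' ha' hcol
    rw [Finset.mem_filter] at ha ha'
    push_neg at ha ha'
    have h1 : a.1 = a'.1 := by
      rcases lt_trichotomy a.1 a'.1 with h | h | h
      · exact absurd h (by simpa [hcol] using ha'.2 a ha.1)
      · exact h
      · exact absurd h (by simpa [hcol] using ha.2 a' ha'.1)
    exact Prod.ext h1 hcol
  · intro c _
    have hne : (D.filter (fun x => x.2 = c)).Nonempty :=
      ⟨(π c, c), Finset.mem_filter.2 ⟨hL ((mem_leafDots π).2 rfl), rfl⟩⟩
    obtain ⟨m, hm, hmmin⟩ := Finset.exists_min_image _ (fun x => x.1) hne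
    rw [Finset.mem_filter] at hm
    refine ⟨m, Finset.mem_filter.2 ⟨hm.1, ?_⟩, hm.2⟩
    rintro ⟨x, hx, hx2, hx1⟩
    have := hmmin x (Finset.mem_filter.2 ⟨hx, by rw [hx2, hm.2]⟩)
    omega

variable (π D) in
lemma card_no_left (hL : leafDots π ⊆ D) :
    (D.filter (fun p => ¬ ∃ x ∈ D, x.1 = p.1 ∧ x.2 < p.2)).card = n := by
  refine Eq.trans (Finset.card_bij (fun p _ => p.1) (fun a ha => Finset.mem_univ _) ?_ ?_)
    (by simp)
  · intro a ha a' ha' hrow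
    rw [Finset.mem_filter] at ha ha'
    push_neg at ha ha'
    have h2 : a.2 = a'.2 := by
      rcases lt_trichotomy a.2 a'.2 with h | h | h
      · exact absurd h (by simpa [hrow] using ha'.2 a ha.1)
      · exact h
      · exact absurd h (by simpa [hrow] using ha.2 a' ha'.1)
    exact Prod.ext hrow h2
  · intro r _
    have hne : (D.filter (fun x => x.1 = r)).Nonempty :=
      ⟨(r, π.symm r), Finset.mem_filter.2 ⟨hL (leaf_mem π r), rfl⟩⟩
    obtain ⟨m, hm, hmmin⟩ := Finset.exists_min_image _ (fun x => x.2) hne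
    rw [Finset.mem_filter] at hm
    refine ⟨m, Finset.mem_filter.2 ⟨hm.1, ?_⟩, hm.2⟩
    rintro ⟨x, hx, hx1, hx2⟩
    have := hmmin x (Finset.mem_filter.2 ⟨hx, by rw [hx1, hm.2]⟩)
    omega

variable (π D) in
lemma dot_edge_count (hL : leafDots π ⊆ D) :
    (dotGraph D).edgeSet.ncard + 2 * n = 2 * D.card := by
  classical
  set Da := D.filter (fun p => ∃ x ∈ D, x.2 = p.2 ∧ x.1 < p.1) with hDa
  set Dl := D.filter (fun p => ∃ x ∈ D, x.1 = p.1 ∧ x.2 < p.2) with hDl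
  have hcardA : Da.card + n = D.card := by
    have := Finset.card_filter_add_card_filter_not
      (s := D) (p := fun p => ∃ x ∈ D, x.2 = p.2 ∧ x.1 < p.1)
    rw [card_no_above π D hL] at this
    exact this
  have hcardL : Dl.card + n = D.card := by
    have := Finset.card_filter_add_card_filter_not
      (s := D) (p := fun p => ∃ x ∈ D, x.1 = p.1 ∧ x.2 < p.2)
    rw [card_no_left π D hL] at this
    exact this
  set S : Finset ((Fin n × Fin n) × Bool) :=
    Da.image (fun p => (p, true)) ∪ Dl.image (fun p => (p, false)) with hS
  have hcardS : S.card = Da.card + Dl.card := by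
    rw [hS, Finset.card_union_of_disjoint, Finset.card_image_of_injective,
      Finset.card_image_of_injective]
    · exact fun a b h => (Prod.ext_iff.1 h).1
    · exact fun a b h => (Prod.ext_iff.1 h).1
    · rw [Finset.disjoint_left]
      rintro pb h1 h2
      obtain ⟨a, -, ha⟩ := Finset.mem_image.1 h1
      obtain ⟨c, -, hc⟩ := Finset.mem_image.1 h2
      rw [← hc] at ha
      exact absurd (congrArg Prod.snd ha) (by simp)
  have hmemA : ∀ p, (p, true) ∈ S ↔ p ∈ Da := by
    intro p
    rw [hS, Finset.mem_union]
    constructor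
    · rintro (h | h)
      · obtain ⟨a, ha, h⟩ := Finset.mem_image.1 h
        have hap : a = p := congrArg Prod.fst h
        rwa [← hap]
      · obtain ⟨a, ha, h⟩ := Finset.mem_image.1 h
        exact absurd (congrArg Prod.snd h) (by simp)
    · intro h
      exact Or.inl (Finset.mem_image.2 ⟨p, h, rfl⟩)
  have hmemL : ∀ p, (p, false) ∈ S ↔ p ∈ Dl := by
    intro p
    rw [hS, Finset.mem_union]
    constructor
    · rintro (h | h)
      · obtain ⟨a, ha, h⟩ := Finset.mem_image.1 h
        exact absurd (congrArg Prod.snd h) (by simp)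
      · obtain ⟨a, ha, h⟩ := Finset.mem_image.1 h
        have hap : a = p := congrArg Prod.fst h
        rwa [← hap]
    · intro h
      exact Or.inr (Finset.mem_image.2 ⟨p, h, rfl⟩)
  have hVa : ∀ p ∈ Da, VRel D p (nav D p) := by
    intro p hp
    rw [hDa, Finset.mem_filter] at hp
    obtain ⟨hp1, x, hx, hx2, hx1⟩ := hp
    obtain ⟨r, hr, -⟩ := exists_VRel hp1 hx hx2 hx1
    exact nav_spec ⟨r, hr⟩
  have hHa : ∀ p ∈ Dl, HRel D p (nah D p) := by
    intro p hp
    rw [hDl, Finset.mem_filter] at hp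
    obtain ⟨hp1, x, hx, hx1, hx2⟩ := hp
    obtain ⟨r, hr, -⟩ := exists_HRel hp1 hx hx1 hx2
    exact nah_spec ⟨r, hr⟩
  have key : S.card = (dotGraph D).edgeFinset.card := by
    apply Finset.card_bij
      (fun pb _ => if pb.2 = true then s(pb.1, nav D pb.1) else s(pb.1, nah D pb.1))
    · rintro ⟨p, b⟩ hpb
      cases b
      · have h := hHa p ((hmemL p).1 hpb)
        show s(p, nah D p) ∈ (dotGraph D).edgeFinset
        rw [SimpleGraph.mem_edgeFinset]
        exact (dotGraph D).mem_edgeSet.2 (HRel_adj' h)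
      · have h := hVa p ((hmemA p).1 hpb)
        show s(p, nav D p) ∈ (dotGraph D).edgeFinset
        rw [SimpleGraph.mem_edgeFinset]
        exact (dotGraph D).mem_edgeSet.2 (VRel_adj' h)
    · rintro ⟨p, b⟩ hpb ⟨p', b'⟩ hpb' heq
      cases b <;> cases b'
      · -- both horizontal
        rw [if_neg Bool.false_ne_true, if_neg Bool.false_ne_true] at heq
        dsimp only at heq
        rw [Sym2.eq_iff] at heq
        have h1 := hHa p ((hmemL p).1 hpb)
        have h2 := hHa p' ((hmemL p').1 hpb')
        rcases heq with ⟨ha, hb⟩ | ⟨ha, hb⟩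
        · rw [ha]
        · exfalso
          have e1 := h1.2.2.2.1
          have e2 := h2.2.2.2.1
          have ha2 := congrArg Prod.snd ha
          have hb2 := congrArg Prod.snd hb
          omega
      · -- p horizontal, p' vertical
        rw [if_neg Bool.false_ne_true, if_pos rfl] at heq
        dsimp only at heq
        rw [Sym2.eq_iff] at heq
        exfalso
        have h1 := hHa p ((hmemL p).1 hpb)
        have h2 := hVa p' ((hmemA p').1 hpb')
        have r1 := h1.2.2.1
        have r2 := h1.2.2.2.1
        have r3 := h2.2.2.1
        have r4 := h2.2.2.2.1
        rcases heq with ⟨ha, hb⟩ | ⟨ha, hb⟩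
        · have ha1 := congrArg Prod.fst ha
          have hb1 := congrArg Prod.fst hb
          omega
        · have ha2 := congrArg Prod.snd ha
          have hb2 := congrArg Prod.snd hb
          omega
      · -- p vertical, p' horizontal
        rw [if_pos rfl, if_neg Bool.false_ne_true] at heq
        dsimp only at heq
        rw [Sym2.eq_iff] at heq
        exfalso
        have h1 := hVa p ((hmemA p).1 hpb)
        have h2 := hHa p' ((hmemL p').1 hpb')
        have r1 := h1.2.2.1
        have r2 := h1.2.2.2.1
        have r3 := h2.2.2.1
        have r4 := h2.2.2.2.1
        rcases heq with ⟨ha, hb⟩ | ⟨ha, hb⟩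
        · have ha1 := congrArg Prod.fst ha
          have hb1 := congrArg Prod.fst hb
          omega
        · have ha2 := congrArg Prod.snd ha
          have hb2 := congrArg Prod.snd hb
          omega
      · -- both vertical
        rw [if_pos rfl, if_pos rfl] at heq
        dsimp only at heq
        rw [Sym2.eq_iff] at heq
        have h1 := hVa p ((hmemA p).1 hpb)
        have h2 := hVa p' ((hmemA p').1 hpb')
        rcases heq with ⟨ha, hb⟩ | ⟨ha, hb⟩
        · rw [ha]
        · exfalso
          have e1 := h1.2.2.2.1
          have e2 := h2.2.2.2.1
          have ha1 := congrArg Prod.fst ha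
          have hb1 := congrArg Prod.fst hb
          omega
    · -- surjectivity
      intro e he
      rw [SimpleGraph.mem_edgeFinset] at he
      induction e with
      | h x y =>
        rw [SimpleGraph.mem_edgeSet, dotGraph, fromRel_adj] at he
        obtain ⟨hne, hrel | hrel⟩ := he
        · rcases dotRel_iff.1 hrel with hv | hh
          · refine ⟨(x, true), (hmemA x).2 ?_, ?_⟩
            · rw [hDa, Finset.mem_filter]
              exact ⟨hv.1, y, hv.2.1, hv.2.2.1.symm, hv.2.2.2.1⟩
            · show s(x, nav D x) = s(x, y)
              rw [nav_eq hv]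
          · refine ⟨(x, false), (hmemL x).2 ?_, ?_⟩
            · rw [hDl, Finset.mem_filter]
              exact ⟨hh.1, y, hh.2.1, hh.2.2.1.symm, hh.2.2.2.1⟩
            · show s(x, nah D x) = s(x, y)
              rw [nah_eq hh]
        · rcases dotRel_iff.1 hrel with hv | hh
          · refine ⟨(y, true), (hmemA y).2 ?_, ?_⟩
            · rw [hDa, Finset.mem_filter]
              exact ⟨hv.1, x, hv.2.1, hv.2.2.1.symm, hv.2.2.2.1⟩
            · show s(y, nav D y) = s(x, y)
              rw [nav_eq hv, Sym2.eq_swap]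
          · refine ⟨(y, false), (hmemL y).2 ?_, ?_⟩
            · rw [hDl, Finset.mem_filter]
              exact ⟨hh.1, x, hh.2.1, hh.2.2.1.symm, hh.2.2.2.1⟩
            · show s(y, nah D y) = s(x, y)
              rw [nah_eq hh, Sym2.eq_swap]
  rw [ncard_edgeSet, ← key, hcardS]
  omega

lemma dot_adj_mem {x y : Fin n × Fin n} (h : (dotGraph D).Adj x y) : x ∈ D ∧ y ∈ D := by
  rw [dotGraph, fromRel_adj] at h
  rcases h.2 with h' | h'
  · exact ⟨h'.1, h'.2.1⟩
  · exact ⟨h'.2.1, h'.1⟩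

variable (D) in
lemma ind_edge_ncard :
    (SimpleGraph.induce (↑D : Set (Fin n × Fin n)) (dotGraph D)).edgeSet.ncard
      = (dotGraph D).edgeSet.ncard := by
  have himg : (dotGraph D).edgeSet =
      Sym2.map Subtype.val ''
        (SimpleGraph.induce (↑D : Set (Fin n × Fin n)) (dotGraph D)).edgeSet := by
    ext e
    induction e with
    | h x y =>
      constructor
      · intro he
        rw [SimpleGraph.mem_edgeSet] at he
        obtain ⟨hx, hy⟩ := dot_adj_mem he
        refine ⟨s(⟨x, hx⟩, ⟨y, hy⟩), ?_, by simp⟩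
        rw [SimpleGraph.mem_edgeSet]
        exact he
      · rintro ⟨e', he', hmap⟩
        rw [← hmap]
        induction e' with
        | h u v =>
          rw [SimpleGraph.mem_edgeSet] at he'
          simp only [Sym2.map_pair_eq, SimpleGraph.mem_edgeSet]
          exact he'
  rw [himg, Set.ncard_image_of_injective _ (Sym2.map.injective Subtype.val_injective)]

variable (π) in
lemma zeta_surj (T : SimpleGraph (Fin n)) (hT : T ≤ permGraph π) (htree : T.IsTree) :
    ∃ D : Finset (Fin n × Fin n), IsCMNAB π D ∧ zeta π D = T := by
  have hn : 0 < n := Fin.pos_iff_nonempty.2 htree.1.nonempty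
  set J := Finset.univ.filter (fun p : Fin n × Fin n => T.Adj p.1 (π p.2) ∧ p.1 < π p.2)
    with hJ
  set D := leafDots π ∪ J with hD
  have hJnotL : ∀ p ∈ J, p ∉ leafDots π := by
    intro p hp hpl
    rw [hJ, Finset.mem_filter] at hp
    have := (mem_leafDots π).1 hpl
    have := hp.2.2
    omega
  have hL : leafDots π ⊆ D := Finset.subset_union_left
  have hmemInt : ∀ p : Fin n × Fin n, (p ∈ D ∧ p ∉ leafDots π) ↔ p ∈ J := by
    intro p
    constructor
    · rintro ⟨hpD, hpl⟩
      rcases Finset.mem_union.1 hpD with h | h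
      · exact absurd h hpl
      · exact h
    · intro h
      exact ⟨Finset.mem_union_right _ h, hJnotL p h⟩
  have hperm : ∀ a b : Fin n, T.Adj a b → a < b → π.symm b < π.symm a := by
    intro a b hadj hab
    have := hT hadj
    rw [permGraph, fromRel_adj] at this
    rcases this.2 with ⟨-, h⟩ | ⟨h, -⟩
    · exact h
    · omega
  have hInt : ∀ p ∈ D, p ∉ leafDots π →
      (∃ q ∈ D, q.2 = p.2 ∧ p.1 < q.1) ∧ (∃ q ∈ D, q.1 = p.1 ∧ p.2 < q.2) := by
    intro p hp hpl
    have hpJ : p ∈ J := (hmemInt p).1 ⟨hp, hpl⟩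
    rw [hJ, Finset.mem_filter] at hpJ
    obtain ⟨-, hadj, hlt⟩ := hpJ
    refine ⟨⟨(π p.2, p.2), hL ((mem_leafDots π).2 rfl), rfl, hlt⟩,
      ⟨(p.1, π.symm p.1), hL (leaf_mem π p.1), rfl, ?_⟩⟩
    have := hperm p.1 (π p.2) hadj hlt
    rwa [Equiv.symm_apply_apply] at this
  have himage : J.image (g π) = T.edgeFinset := by
    ext e
    induction e with
    | h a b =>
      rw [SimpleGraph.mem_edgeFinset, SimpleGraph.mem_edgeSet]
      constructor
      · intro h
        obtain ⟨p, hp, hgp⟩ := Finset.mem_image.1 h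
        rw [hJ, Finset.mem_filter] at hp
        obtain ⟨-, hadj, hlt⟩ := hp
        rw [g, Sym2.eq_iff] at hgp
        rcases hgp with ⟨h1, h2⟩ | ⟨h1, h2⟩
        · rw [← h1, ← h2]; exact hadj
        · rw [← h1, ← h2]; exact hadj.symm
      · intro hadj
        rcases lt_trichotomy a b with h | h | h
        · refine Finset.mem_image.2 ⟨(a, π.symm b), ?_, ?_⟩
          · rw [hJ, Finset.mem_filter]
            refine ⟨Finset.mem_univ _, ?_, ?_⟩ <;>
              simp only [Equiv.apply_symm_apply]
            · exact hadj
            · exact h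
          · rw [g]
            simp
        · exact absurd h hadj.ne
        · refine Finset.mem_image.2 ⟨(b, π.symm a), ?_, ?_⟩
          · rw [hJ, Finset.mem_filter]
            refine ⟨Finset.mem_univ _, ?_, ?_⟩ <;>
              simp only [Equiv.apply_symm_apply]
            · exact hadj.symm
            · exact h
          · rw [g]
            simp [Sym2.eq_swap]
  have hJcard : J.card = n - 1 := by
    have hinj : Set.InjOn (g π) ↑J := by
      intro p hp q hq h
      rw [Finset.mem_coe, hJ, Finset.mem_filter] at hp hq
      exact g_inj' hp.2.2 hq.2.2 h
    have h1 : J.card = T.edgeFinset.card := by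
      rw [← himage, Finset.card_image_of_injOn hinj]
    have h2 := htree.card_edgeFinset
    rw [Fintype.card_fin] at h2
    omega
  have hdisj : Disjoint (leafDots π) J := by
    rw [Finset.disjoint_left]
    intro p hp hpJ
    exact hJnotL p hpJ hp
  have hDcard : D.card = 2 * n - 1 := by
    rw [hD, Finset.card_union_of_disjoint hdisj, card_leafDots, hJcard]
    omega
  -- connectivity of the induced dot graph
  have leafVmem : ∀ a : Fin n, ((a, π.symm a) : Fin n × Fin n) ∈ D :=
    fun a => hL (leaf_mem π a)
  set leafV : Fin n → ↥(↑D : Set (Fin n × Fin n)) :=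
    fun a => ⟨(a, π.symm a), leafVmem a⟩ with hleafV
  have hstep : ∀ a b : Fin n, T.Adj a b →
      (SimpleGraph.induce (↑D : Set (Fin n × Fin n)) (dotGraph D)).Reachable
        (leafV a) (leafV b) := by
    have helper : ∀ a b : Fin n, T.Adj a b → a < b →
        (SimpleGraph.induce (↑D : Set (Fin n × Fin n)) (dotGraph D)).Reachable
          (leafV a) (leafV b) := by
      intro a b hadj hab
      have hpD : ((a, π.symm b) : Fin n × Fin n) ∈ D := by
        refine Finset.mem_union_right _ ?_
        rw [hJ, Finset.mem_filter]
        refine ⟨Finset.mem_univ _, ?_, ?_⟩ <;> simp only [Equiv.apply_symm_apply]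
        · exact hadj
        · exact hab
      have r1 := reach_col (D := D) hpD (leafVmem b) rfl
      have r2 := reach_row (D := D) hpD (leafVmem a) rfl
      exact r2.symm.trans r1
    intro a b hadj
    rcases lt_trichotomy a b with h | h | h
    · exact helper a b hadj h
    · rw [h]
    · exact (helper b a hadj.symm h).symm
  have hconn : (SimpleGraph.induce (↑D : Set (Fin n × Fin n)) (dotGraph D)).Connected := by
    rw [connected_iff]
    constructor
    · intro u v
      have hu2 : u.1.2 = π.symm (π u.1.2) := by rw [Equiv.symm_apply_apply]
      have hv2 : v.1.2 = π.symm (π v.1.2) := by rw [Equiv.symm_apply_apply]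
      have cu : (SimpleGraph.induce (↑D : Set (Fin n × Fin n)) (dotGraph D)).Reachable
          u (leafV (π u.1.2)) := by
        have := reach_col (D := D) (p := u.1) (q := (π u.1.2, π.symm (π u.1.2))) u.2
          (leafVmem (π u.1.2)) hu2
        exact this
      have cv : (SimpleGraph.induce (↑D : Set (Fin n × Fin n)) (dotGraph D)).Reachable
          v (leafV (π v.1.2)) := by
        have := reach_col (D := D) (p := v.1) (q := (π v.1.2, π.symm (π v.1.2))) v.2
          (leafVmem (π v.1.2)) hv2
        exact this
      have mid := reachable_of_adj_imp leafV (fun a b h => hstep a b h)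
        (htree.1.preconnected (π u.1.2) (π v.1.2))
      exact (cu.trans mid).trans cv.symm
    · exact ⟨leafV ⟨0, hn⟩⟩
  have hcardV : Fintype.card ↥(↑D : Set (Fin n × Fin n)) = D.card := by
    rw [← Nat.card_eq_fintype_card, Nat.card_coe_set_eq, Set.ncard_coe_finset]
  have hedges := dot_edge_count π D hL
  have htree2 : (SimpleGraph.induce (↑D : Set (Fin n × Fin n)) (dotGraph D)).IsTree := by
    refine isTree_of_connected_of_card _ hconn ?_
    rw [hcardV, ind_edge_ncard D, hDcard]
    rw [hDcard] at hedges
    omega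
  refine ⟨D, ⟨hL, hDcard, hInt, htree2⟩, ?_⟩
  ext a b
  rw [zeta_adj]
  have hiff : ∀ x y : Fin n, ((x, π.symm y) ∈ D ∧ (x, π.symm y) ∉ leafDots π) ↔
      (T.Adj x y ∧ x < y) := by
    intro x y
    rw [hmemInt, hJ, Finset.mem_filter]
    simp only [Finset.mem_univ, true_and, Equiv.apply_symm_apply]
  rw [hiff, hiff]
  constructor
  · rintro ⟨hne, ⟨h, -⟩ | ⟨h, -⟩⟩
    · exact h
    · exact h.symm
  · intro hadj
    refine ⟨hadj.ne, ?_⟩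
    rcases lt_trichotomy a b with h | h | h
    · exact Or.inl ⟨hadj, h⟩
    · exact absurd h hadj.ne
    · exact Or.inr ⟨hadj.symm, h⟩

end ZetaAux

/-- `ζ` is a bijection from the set `M_π` of CMNABs on `T_π` onto the
set of spanning trees of the permutation graph `G_π`. -/
theorem zeta_bijOn {n : ℕ} (π : Equiv.Perm (Fin n)) :
    Set.BijOn (zeta π) {D | IsCMNAB π D}
      {T : SimpleGraph (Fin n) | T ≤ permGraph π ∧ T.IsTree} := by
  refine ⟨?_, ?_, ?_⟩
  · intro D hD
    exact ZetaAux.forward_mapsTo hD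
  · intro D1 h1 D2 h2 heq
    exact ZetaAux.zeta_injOn h1 h2 heq
  · intro T hT
    obtain ⟨D, hD, hzeta⟩ := ZetaAux.zeta_surj π T hT.1 hT.2
    exact ⟨D, hD, hzeta⟩
end

section
/- A graph G on n vertices is a Ferrers graph if and only if there exists an indecomposable permutation π of [n] with exactly one descent such that G is isomorphic to the permutation graph G_π. -/
/-- `π` has exactly one descent: there is exactly one position `a` such that the next
position `b` satisfies `π b < π a`. -/
def HasExactlyOneDescent {n : ℕ} (π : Equiv.Perm (Fin n)) : Prop :=
  ∃! a : Fin n, ∃ b : Fin n, (b : ℕ) = (a : ℕ) + 1 ∧ π b < π a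

/-- The bipartite graph on parts `t_0, …, t_k` and `b_0, …, b_m` whose edges are the
pairs `(t_i, b_j)` with `E i j`. -/
def bipartiteGraph (k m : ℕ) (E : Fin (k + 1) → Fin (m + 1) → Prop) :
    SimpleGraph (Fin (k + 1) ⊕ Fin (m + 1)) :=
  SimpleGraph.fromRel (fun x y => ∃ i j, x = Sum.inl i ∧ y = Sum.inr j ∧ E i j)

/-- The edge relation of a Ferrers graph: if `(t_i, b_j)` is an edge and `r ≤ i`,
`s ≤ j`, then `(t_r, b_s)` is an edge; and both `(t_0, b_m)` and `(t_k, b_0)` are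
edges. -/
def IsFerrersRel (k m : ℕ) (E : Fin (k + 1) → Fin (m + 1) → Prop) : Prop :=
  (∀ i j r s, E i j → r ≤ i → s ≤ j → E r s) ∧ E 0 (Fin.last m) ∧ E (Fin.last k) 0

/-- `G` is a Ferrers graph: it is isomorphic to the bipartite graph of some Ferrers
edge relation. -/
def IsFerrersGraph {n : ℕ} (G : SimpleGraph (Fin n)) : Prop :=
  ∃ (k m : ℕ) (E : Fin (k + 1) → Fin (m + 1) → Prop),
    IsFerrersRel k m E ∧ Nonempty (G ≃g bipartiteGraph k m E)

lemma mem_iff_lt_card_of_downclosed {N : ℕ} (S : Finset (Fin N))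
    (h : ∀ a b : Fin N, a ≤ b → b ∈ S → a ∈ S) (s : Fin N) :
    s ∈ S ↔ (s : ℕ) < S.card := by
  constructor
  · intro hs
    have hsub : Finset.Iic s ⊆ S := fun a ha => h a s (Finset.mem_Iic.1 ha) hs
    have := Finset.card_le_card hsub
    rw [Fin.card_Iic] at this
    omega
  · intro hc
    by_contra hs
    have hsub : S ⊆ Finset.Iio s := by
      intro t ht
      rw [Finset.mem_Iio]
      rcases lt_or_ge t s with h' | h'
      · exact h'
      · exact absurd (h s t h' ht) hs
    have := Finset.card_le_card hsub
    rw [Fin.card_Iio] at this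
    omega

lemma permGraph_adj_apply {n : ℕ} (π : Equiv.Perm (Fin n)) (p q : Fin n) :
    (permGraph π).Adj (π p) (π q) ↔ (π p < π q ∧ q < p) ∨ (π q < π p ∧ p < q) := by
  simp only [permGraph, SimpleGraph.fromRel_adj, Equiv.symm_apply_apply, ne_eq,
    EmbeddingLike.apply_eq_iff_eq]
  constructor
  · rintro ⟨-, h⟩; tauto
  · rintro (⟨h1, h2⟩ | ⟨h1, h2⟩) <;> exact ⟨by rintro rfl; exact absurd h2 (lt_irrefl _), by tauto⟩

lemma bip_adj_inl_inr {k m : ℕ} (E : Fin (k+1) → Fin (m+1) → Prop) (r : Fin (k+1)) (s : Fin (m+1)) :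
    (bipartiteGraph k m E).Adj (Sum.inl r) (Sum.inr s) ↔ E r s := by
  simp [bipartiteGraph, SimpleGraph.fromRel_adj]

lemma bip_adj_inr_inl {k m : ℕ} (E : Fin (k+1) → Fin (m+1) → Prop) (r : Fin (k+1)) (s : Fin (m+1)) :
    (bipartiteGraph k m E).Adj (Sum.inr s) (Sum.inl r) ↔ E r s := by
  simp [bipartiteGraph, SimpleGraph.fromRel_adj]

lemma bip_adj_inl_inl {k m : ℕ} (E : Fin (k+1) → Fin (m+1) → Prop) (r r' : Fin (k+1)) :
    ¬ (bipartiteGraph k m E).Adj (Sum.inl r) (Sum.inl r') := by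
  simp [bipartiteGraph, SimpleGraph.fromRel_adj]

lemma bip_adj_inr_inr {k m : ℕ} (E : Fin (k+1) → Fin (m+1) → Prop) (s s' : Fin (m+1)) :
    ¬ (bipartiteGraph k m E).Adj (Sum.inr s) (Sum.inr s') := by
  simp [bipartiteGraph, SimpleGraph.fromRel_adj]

lemma bipartiteGraph_congr {k m : ℕ} {E E' : Fin (k+1) → Fin (m+1) → Prop}
    (h : ∀ r s, E r s ↔ E' r s) : bipartiteGraph k m E = bipartiteGraph k m E' := by
  have : E = E' := funext fun r => funext fun s => propext (h r s)
  rw [this]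

noncomputable def sumEquiv (k m : ℕ) : (Fin (k+1) ⊕ Fin (m+1)) ≃ Fin (k+1+(m+1)) :=
  Equiv.ofBijective (fun x => match x with
    | .inl r => (⟨k - r, by omega⟩ : Fin (k+1+(m+1)))
    | .inr s => ⟨k + 1 + s, by have := s.isLt; omega⟩) (by
  rw [Fintype.bijective_iff_injective_and_card]
  refine ⟨?_, by simp⟩
  rintro (r | s) (r' | s') h <;>
    simp only [Fin.mk.injEq, Sum.inl.injEq, Sum.inr.injEq] at h ⊢
  · have := r.isLt; have := r'.isLt; ext; omega
  · have := r.isLt; omega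
  · have := r'.isLt; omega
  · ext; omega)

lemma sumEquiv_inl (k m : ℕ) (r : Fin (k+1)) :
    ((sumEquiv k m (Sum.inl r)) : ℕ) = k - r := rfl

lemma sumEquiv_inr (k m : ℕ) (s : Fin (m+1)) :
    ((sumEquiv k m (Sum.inr s)) : ℕ) = k + 1 + s := rfl

lemma iso_perm_bipartite {n k m : ℕ} (hn : n = k + 1 + (m + 1)) (π : Equiv.Perm (Fin n))
    (hrun : ∀ p q : ℕ, (hq : q < n) → (hpq : p < q) → (q ≤ k ∨ k < p) →
      π ⟨p, by omega⟩ < π ⟨q, hq⟩) :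
    Nonempty (bipartiteGraph k m
      (fun r s => π ⟨k + 1 + s, by have := s.isLt; omega⟩ < π ⟨k - r, by omega⟩)
      ≃g permGraph π) := by
  have key : ∀ p q : Fin n, (p : ℕ) < q → ((q : ℕ) ≤ k ∨ k < (p : ℕ)) → π p < π q := by
    intro p q h1 h2
    have := hrun p q q.isLt h1 h2
    simpa using this
  set e : (Fin (k+1) ⊕ Fin (m+1)) ≃ Fin n := (sumEquiv k m).trans (finCongr hn.symm) with he
  have einl : ∀ r : Fin (k+1), ((e (Sum.inl r)) : ℕ) = k - r := fun _ => rfl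
  have einr : ∀ s : Fin (m+1), ((e (Sum.inr s)) : ℕ) = k + 1 + s := fun _ => rfl
  refine ⟨⟨e.trans π, ?_⟩⟩
  rintro (r | s) (r' | s') <;> simp only [Equiv.trans_apply, permGraph_adj_apply]
  · -- inl inl
    rw [iff_false_intro (bip_adj_inl_inl _ r r'), iff_false]
    rintro (⟨h1, h2⟩ | ⟨h1, h2⟩)
    · exact absurd h1 (asymm (key _ _ h2 (Or.inl (by rw [einl]; omega))))
    · exact absurd h1 (asymm (key _ _ h2 (Or.inl (by rw [einl]; omega))))
  · -- inl inr
    rw [bip_adj_inl_inr]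
    have hq : e (Sum.inr s') = ⟨k + 1 + (s' : ℕ), by have := s'.isLt; omega⟩ := Fin.ext rfl
    have hp : e (Sum.inl r) = ⟨k - (r : ℕ), by omega⟩ := Fin.ext rfl
    rw [hq, hp]
    constructor
    · rintro (⟨h1, h2⟩ | ⟨h1, h2⟩)
      · exact absurd h2 (by simp [Fin.lt_def]; omega)
      · exact h1
    · intro h
      exact Or.inr ⟨h, by simp [Fin.lt_def]; omega⟩
  · -- inr inl
    rw [bip_adj_inr_inl]
    have hq : e (Sum.inr s) = ⟨k + 1 + (s : ℕ), by have := s.isLt; omega⟩ := Fin.ext rfl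
    have hp : e (Sum.inl r') = ⟨k - (r' : ℕ), by omega⟩ := Fin.ext rfl
    rw [hq, hp]
    constructor
    · rintro (⟨h1, h2⟩ | ⟨h1, h2⟩)
      · exact h1
      · exact absurd h2 (by simp [Fin.lt_def]; omega)
    · intro h
      exact Or.inl ⟨h, by simp [Fin.lt_def]; omega⟩
  · -- inr inr
    rw [iff_false_intro (bip_adj_inr_inr _ s s'), iff_false]
    rintro (⟨h1, h2⟩ | ⟨h1, h2⟩)
    · exact absurd h1 (asymm (key _ _ h2 (Or.inr (by rw [einr]; omega))))
    · exact absurd h1 (asymm (key _ _ h2 (Or.inr (by rw [einr]; omega))))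

set_option maxHeartbeats 1600000 in
lemma perm_to_ferrers {n : ℕ} (G : SimpleGraph (Fin n)) (π : Equiv.Perm (Fin n))
    (hind : IsIndecomposable π) (hdes : HasExactlyOneDescent π)
    (hiso : Nonempty (G ≃g permGraph π)) : IsFerrersGraph G := by
  obtain ⟨a, ⟨b, hb, hba⟩, huniq⟩ := hdes
  have hbn := b.isLt
  set k := (a : ℕ) with hk
  have hk2 : k + 2 ≤ n := by omega
  set m := n - k - 2 with hm
  have hn : n = k + 1 + (m + 1) := by omega
  -- no descent except at position k
  have nodes : ∀ i : ℕ, (h : i + 1 < n) → i ≠ k → π ⟨i, by omega⟩ < π ⟨i + 1, h⟩ := by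
    intro i h hik
    rcases lt_trichotomy (π ⟨i + 1, h⟩) (π ⟨i, by omega⟩) with hlt | heq | hgt
    · exfalso
      have := huniq ⟨i, by omega⟩ ⟨⟨i + 1, h⟩, by simp, hlt⟩
      apply hik
      have : ((⟨i, by omega⟩ : Fin n) : ℕ) = (a : ℕ) := by rw [this]
      simpa using this
    · exact absurd (π.injective heq) (by simp)
    · exact hgt
  -- monotone on each run
  have mono : ∀ q : ℕ, (hq : q < n) → ∀ p : ℕ, (hpq : p ≤ q) → (q ≤ k ∨ k < p) →
      π ⟨p, by omega⟩ ≤ π ⟨q, hq⟩ := by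
    intro q
    induction q with
    | zero =>
      intro hq p hpq _
      have : p = 0 := by omega
      subst this
      exact le_refl _
    | succ q ih =>
      intro hq p hpq hcond
      rcases Nat.eq_or_lt_of_le hpq with heq | hlt
      · subst heq; exact le_refl _
      · have h1 : π ⟨p, by omega⟩ ≤ π ⟨q, by omega⟩ := ih (by omega) p (by omega) (by omega)
        have h2 : π ⟨q, by omega⟩ < π ⟨q + 1, hq⟩ := nodes q hq (by omega)
        exact le_trans h1 (le_of_lt h2)
  have srun : ∀ p q : ℕ, (hq : q < n) → (hpq : p < q) → (q ≤ k ∨ k < p) →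
      π ⟨p, by omega⟩ < π ⟨q, hq⟩ := by
    intro p q hq hpq hc
    refine lt_of_le_of_ne (mono q hq p (le_of_lt hpq) hc) ?_
    intro heq
    have := π.injective heq
    simp only [Fin.mk.injEq] at this
    omega
  -- top corner : π ⟨k⟩ has value n - 1
  have htop : ((π ⟨k, by omega⟩ : Fin n) : ℕ) = n - 1 := by
    have h1 := hind (n - 1) (by omega) (by omega)
    push_neg at h1
    obtain ⟨i, hi1, hi2⟩ := h1
    have hiv := (π i).isLt
    have hie : ((π i : Fin n) : ℕ) = n - 1 := by omega
    rcases le_or_gt (i : ℕ) k with hik | hik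
    · have h2 := mono k (by omega) i hik (Or.inl le_rfl)
      rw [Fin.eta] at h2
      have := (π ⟨k, by omega⟩).isLt
      have h3 : ((π i : Fin n) : ℕ) ≤ ((π ⟨k, by omega⟩ : Fin n) : ℕ) := h2
      omega
    · exfalso
      have h2 := srun i (n - 1) (by omega) (by omega) (Or.inr hik)
      rw [Fin.eta] at h2
      have h3 : ((π i : Fin n) : ℕ) < ((π ⟨n - 1, by omega⟩ : Fin n) : ℕ) := h2
      have := (π ⟨n - 1, by omega⟩).isLt
      omega
  -- bottom corner : π ⟨k+1⟩ has value 0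
  have hbot : ((π ⟨k + 1, by omega⟩ : Fin n) : ℕ) = 0 := by
    have h0 : (0 : ℕ) < n := by omega
    have h1 := hind 1 Nat.one_pos (by omega)
    push_neg at h1
    obtain ⟨i, hi1, hi2⟩ := h1
    have hi0 : i = ⟨0, h0⟩ := by ext; simp; omega
    rw [hi0] at hi2
    set j := π.symm ⟨0, h0⟩ with hj
    have hjv : π j = ⟨0, h0⟩ := π.apply_symm_apply _
    have h4 : π ⟨(j : ℕ), j.isLt⟩ = π j := by rw [Fin.eta]
    rcases le_or_gt (j : ℕ) k with hjk | hjk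
    · exfalso
      have h2 : ((π ⟨0, h0⟩ : Fin n) : ℕ) ≤ ((π ⟨(j : ℕ), j.isLt⟩ : Fin n) : ℕ) :=
        mono j j.isLt 0 (Nat.zero_le _) (Or.inl hjk)
      rw [h4, hjv] at h2
      simp at h2
      omega
    · have h2 : ((π ⟨k + 1, by omega⟩ : Fin n) : ℕ) ≤ ((π ⟨(j : ℕ), j.isLt⟩ : Fin n) : ℕ) :=
        mono j j.isLt (k + 1) hjk (Or.inr (by omega))
      rw [h4, hjv] at h2
      simpa using h2
  have htop' : ∀ p q : Fin n, (q : ℕ) = k → (p : ℕ) ≠ (q : ℕ) → π p < π q := by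
    intro p q hq hpq
    have h5 : ((π q : Fin n) : ℕ) = n - 1 := by
      rw [congrArg π (Fin.ext (show (q : ℕ) = ((⟨k, by omega⟩ : Fin n) : ℕ) by simpa using hq))]
      exact htop
    have h2 := (π p).isLt
    have h4 : ((π p : Fin n) : ℕ) ≠ ((π q : Fin n) : ℕ) :=
      fun h => hpq (congrArg Fin.val (π.injective (Fin.ext h)))
    rw [Fin.lt_def]
    omega
  have hbot' : ∀ p q : Fin n, (p : ℕ) = k + 1 → (p : ℕ) ≠ (q : ℕ) → π p < π q := by
    intro p q hp hpq
    have h5 : ((π p : Fin n) : ℕ) = 0 := by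
      rw [congrArg π (Fin.ext (show (p : ℕ) = ((⟨k + 1, by omega⟩ : Fin n) : ℕ) by simpa using hp))]
      exact hbot
    have h4 : ((π p : Fin n) : ℕ) ≠ ((π q : Fin n) : ℕ) :=
      fun h => hpq (congrArg Fin.val (π.injective (Fin.ext h)))
    rw [Fin.lt_def]
    omega
  obtain ⟨isoG⟩ := hiso
  obtain ⟨isoPB⟩ := iso_perm_bipartite hn π srun
  refine ⟨k, m, _, ⟨?_, ?_, ?_⟩, ⟨isoG.trans isoPB.symm⟩⟩
  · intro i j r s hE hri hsj
    have hsj' : (s : ℕ) ≤ (j : ℕ) := hsj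
    have hri' : (r : ℕ) ≤ (i : ℕ) := hri
    have hik := i.isLt
    have hjk := j.isLt
    have h1 : π ⟨k + 1 + (s : ℕ), by omega⟩ ≤ π ⟨k + 1 + (j : ℕ), by omega⟩ :=
      mono (k + 1 + (j : ℕ)) (by omega) (k + 1 + (s : ℕ)) (by omega) (Or.inr (by omega))
    have h2 : π ⟨k - (i : ℕ), by omega⟩ ≤ π ⟨k - (r : ℕ), by omega⟩ :=
      mono (k - (r : ℕ)) (by omega) (k - (i : ℕ)) (by omega) (Or.inl (by omega))
    exact lt_of_le_of_lt h1 (lt_of_lt_of_le hE h2)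
  · apply htop' <;> simp [Fin.val_last] <;> omega
  · apply hbot' <;> simp [Fin.val_last] <;> omega

set_option maxHeartbeats 1600000 in
lemma ferrers_to_perm {n : ℕ} (G : SimpleGraph (Fin n)) (hF : IsFerrersGraph G) :
    ∃ π : Equiv.Perm (Fin n), IsIndecomposable π ∧ HasExactlyOneDescent π ∧
      Nonempty (G ≃g permGraph π) := by
  classical
  obtain ⟨k, m, E, ⟨hmono, h0last, hlast0⟩, ⟨iso⟩⟩ := hF
  have hn : n = k + 1 + (m + 1) := by
    have := Fintype.card_congr iso.toEquiv
    simpa using this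
  -- row degrees
  obtain ⟨D, hDdef⟩ : ∃ D : Fin (k+1) → ℕ,
      D = fun r => (Finset.univ.filter (fun s => E r s)).card := ⟨_, rfl⟩
  have hDmem : ∀ (r : Fin (k+1)) (s : Fin (m+1)), E r s ↔ (s : ℕ) < D r := by
    intro r s
    rw [hDdef]
    rw [← mem_iff_lt_card_of_downclosed (Finset.univ.filter (fun s => E r s))
      (fun a b hab hb => by
        simp only [Finset.mem_filter, Finset.mem_univ, true_and] at hb ⊢
        exact hmono r b r a hb le_rfl hab)]
    simp
  have hDle : ∀ r, D r ≤ m + 1 := by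
    intro r
    rw [hDdef]
    simpa using Finset.card_filter_le Finset.univ (fun s => E r s)
  have hDanti : ∀ r r' : Fin (k+1), r ≤ r' → D r' ≤ D r := by
    intro r r' hrr
    rw [hDdef]
    apply Finset.card_le_card
    intro s hs
    simp only [Finset.mem_filter, Finset.mem_univ, true_and] at hs ⊢
    exact hmono r' s r s hs hrr le_rfl
  have hD1 : ∀ r, 1 ≤ D r := by
    intro r
    have h1 : E r 0 := hmono (Fin.last k) 0 r 0 hlast0 (Fin.le_last r) le_rfl
    rw [hDmem] at h1
    omega
  have hD0 : ∀ s : Fin (m+1), (s : ℕ) < D 0 := by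
    intro s
    rw [← hDmem]
    exact hmono 0 (Fin.last m) 0 s h0last le_rfl (Fin.le_last s)
  -- column degrees, as a function on ℕ
  obtain ⟨c, hcdef⟩ : ∃ c : ℕ → ℕ,
      c = fun s => (Finset.univ.filter (fun r : Fin (k+1) => s < D r)).card := ⟨_, rfl⟩
  have hcmem : ∀ (r : Fin (k+1)) (s : ℕ), s < D r ↔ (r : ℕ) < c s := by
    intro r s
    rw [hcdef]
    rw [← mem_iff_lt_card_of_downclosed (Finset.univ.filter (fun r : Fin (k+1) => s < D r))
      (fun a b hab hb => by
        simp only [Finset.mem_filter, Finset.mem_univ, true_and] at hb ⊢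
        exact lt_of_lt_of_le hb (hDanti a b hab))]
    simp
  have hcle : ∀ s, c s ≤ k + 1 := by
    intro s
    rw [hcdef]
    simpa using Finset.card_filter_le Finset.univ (fun r : Fin (k+1) => s < D r)
  have hcanti : ∀ s s' : ℕ, s ≤ s' → c s' ≤ c s := by
    intro s s' hss
    rw [hcdef]
    apply Finset.card_le_card
    intro r hr
    simp only [Finset.mem_filter, Finset.mem_univ, true_and] at hr ⊢
    omega
  have hc0 : ∀ r : Fin (k+1), (r : ℕ) < c 0 := by
    intro r
    rw [← hcmem]
    exact hD1 r
  have hc0' : c 0 = k + 1 := by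
    have h1 := hc0 (Fin.last k)
    have h2 := hcle 0
    simp only [Fin.val_last] at h1
    omega
  have hc1 : ∀ s : ℕ, s ≤ m → 1 ≤ c s := by
    intro s hs
    have h1 : ((0 : Fin (k+1)) : ℕ) < c s := by
      rw [← hcmem]
      have := hD0 ⟨s, by omega⟩
      simpa using this
    omega
  -- the shifted column counts
  obtain ⟨A, hAdef⟩ : ∃ A : ℕ → ℕ,
      A = fun i => (Finset.univ.filter (fun t : Fin (m+1) => k - i < c t)).card := ⟨_, rfl⟩
  have hAle : ∀ i, A i ≤ m + 1 := by
    intro i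
    rw [hAdef]
    simpa using Finset.card_filter_le Finset.univ (fun t : Fin (m+1) => k - i < c t)
  have hAmono : ∀ i i' : ℕ, i ≤ i' → A i ≤ A i' := by
    intro i i' hii
    rw [hAdef]
    apply Finset.card_le_card
    intro t ht
    simp only [Finset.mem_filter, Finset.mem_univ, true_and] at ht ⊢
    omega
  have hAk : A k = m + 1 := by
    have h1 : (Finset.univ.filter (fun t : Fin (m+1) => k - k < c t)) = Finset.univ := by
      ext t
      simp only [Finset.mem_filter, Finset.mem_univ, true_and, iff_true]
      have := hc1 t (by omega)
      omega
    rw [hAdef]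
    simp only [h1]
    simp
  have hA1 : ∀ i, 1 ≤ A i := by
    intro i
    have h1 : (0 : Fin (m+1)) ∈ Finset.univ.filter (fun t : Fin (m+1) => k - i < c t) := by
      simp only [Finset.mem_filter, Finset.mem_univ, true_and]
      have h2 : ((0 : Fin (m+1)) : ℕ) = 0 := rfl
      rw [h2, hc0']
      omega
    rw [hAdef]
    exact Finset.card_pos.2 ⟨0, h1⟩
  -- key comparisons
  have M1 : ∀ i : ℕ, i ≤ k → ∀ s : ℕ, s ≤ m → k - i < c s →
      s + (k + 1 - c s) < i + A i := by
    intro i hi s hs hcs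
    have h1 : Finset.Iic (⟨s, by omega⟩ : Fin (m+1)) ⊆
        Finset.univ.filter (fun t : Fin (m+1) => k - i < c t) := by
      intro t ht
      simp only [Finset.mem_filter, Finset.mem_univ, true_and]
      have h2 : (t : ℕ) ≤ s := by
        have := Finset.mem_Iic.1 ht
        rw [Fin.le_def] at this
        simpa using this
      have := hcanti t s h2
      omega
    have h2 := Finset.card_le_card h1
    rw [Fin.card_Iic] at h2
    have h3 : (Finset.univ.filter (fun t : Fin (m+1) => k - i < c t)).card = A i := by
      rw [hAdef]
    rw [h3] at h2
    simp only [Fin.val_mk] at h2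
    have := hcle s
    omega
  have M2 : ∀ i : ℕ, i ≤ k → ∀ s : ℕ, s ≤ m → c s ≤ k - i →
      i + A i < s + (k + 1 - c s) := by
    intro i hi s hs hcs
    have h1 : Finset.univ.filter (fun t : Fin (m+1) => k - i < c t) ⊆
        Finset.Iio (⟨s, by omega⟩ : Fin (m+1)) := by
      intro t ht
      simp only [Finset.mem_filter, Finset.mem_univ, true_and] at ht
      rw [Finset.mem_Iio, Fin.lt_def]
      simp only [Fin.val_mk]
      by_contra h
      have := hcanti s t (by omega)
      omega
    have h2 := Finset.card_le_card h1
    rw [Fin.card_Iio] at h2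
    have h3 : (Finset.univ.filter (fun t : Fin (m+1) => k - i < c t)).card = A i := by
      rw [hAdef]
    rw [h3] at h2
    simp only [Fin.val_mk] at h2
    have := hc1 s hs
    omega
  -- the function
  obtain ⟨f, hfdef⟩ : ∃ f : Fin n → Fin n, f = fun x : Fin n =>
      if h : (x : ℕ) ≤ k then
        (⟨(x : ℕ) + A (x : ℕ), by have := hAle (x : ℕ); omega⟩ : Fin n)
      else
        ⟨((x : ℕ) - (k+1)) + (k + 1 - c ((x : ℕ) - (k+1))), by
          have := x.isLt
          have := hc1 ((x : ℕ) - (k+1)) (by omega)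
          omega⟩ := ⟨_, rfl⟩
  have ftop : ∀ (p : ℕ) (hp : p < n), p ≤ k → ((f ⟨p, hp⟩ : Fin n) : ℕ) = p + A p := by
    intro p hp hpk
    rw [hfdef]
    simp only []
    rw [dif_pos (show ((⟨p, hp⟩ : Fin n) : ℕ) ≤ k from hpk)]
  have fbot : ∀ (p : ℕ) (hp : p < n), k < p →
      ((f ⟨p, hp⟩ : Fin n) : ℕ) = (p - (k+1)) + (k + 1 - c (p - (k+1))) := by
    intro p hp hkp
    rw [hfdef]
    simp only []
    rw [dif_neg (show ¬ ((⟨p, hp⟩ : Fin n) : ℕ) ≤ k from not_le.2 hkp)]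
  have hinj : Function.Injective f := by
    intro x y hxy
    have hxy' : ((f x : Fin n) : ℕ) = ((f y : Fin n) : ℕ) := by rw [hxy]
    have hx := x.isLt
    have hy := y.isLt
    rw [show x = ⟨(x : ℕ), hx⟩ from (Fin.eta x hx).symm,
        show y = ⟨(y : ℕ), hy⟩ from (Fin.eta y hy).symm] at hxy'
    ext
    by_cases h1 : (x : ℕ) ≤ k <;> by_cases h2 : (y : ℕ) ≤ k
    · rw [ftop _ _ h1, ftop _ _ h2] at hxy'
      rcases lt_trichotomy (x : ℕ) (y : ℕ) with h | h | h
      · have := hAmono x y (le_of_lt h); omega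
      · exact h
      · have := hAmono y x (le_of_lt h); omega
    · exfalso
      push_neg at h2
      rw [ftop _ _ h1, fbot _ _ h2] at hxy'
      rcases lt_or_ge (k - (x : ℕ)) (c ((y : ℕ) - (k+1))) with h | h
      · have := M1 x h1 ((y : ℕ) - (k+1)) (by omega) h; omega
      · have := M2 x h1 ((y : ℕ) - (k+1)) (by omega) h; omega
    · exfalso
      push_neg at h1
      rw [fbot _ _ h1, ftop _ _ h2] at hxy'
      rcases lt_or_ge (k - (y : ℕ)) (c ((x : ℕ) - (k+1))) with h | h
      · have := M1 y h2 ((x : ℕ) - (k+1)) (by omega) h; omega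
      · have := M2 y h2 ((x : ℕ) - (k+1)) (by omega) h; omega
    · push_neg at h1
      push_neg at h2
      rw [fbot _ _ h1, fbot _ _ h2] at hxy'
      have hcx := hcle ((x : ℕ) - (k+1))
      have hcy := hcle ((y : ℕ) - (k+1))
      have hc1x := hc1 ((x : ℕ) - (k+1)) (by omega)
      have hc1y := hc1 ((y : ℕ) - (k+1)) (by omega)
      rcases lt_trichotomy (x : ℕ) (y : ℕ) with h | h | h
      · have := hcanti ((x : ℕ) - (k+1)) ((y : ℕ) - (k+1)) (by omega); omega
      · exact h
      · have := hcanti ((y : ℕ) - (k+1)) ((x : ℕ) - (k+1)) (by omega); omega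
  set π : Equiv.Perm (Fin n) := Equiv.ofBijective f (Finite.injective_iff_bijective.1 hinj)
    with hπ
  have πval : ∀ z : Fin n, π z = f z := fun z => rfl
  -- strict runs
  have srun : ∀ p q : ℕ, (hq : q < n) → (hpq : p < q) → (q ≤ k ∨ k < p) →
      π ⟨p, by omega⟩ < π ⟨q, hq⟩ := by
    intro p q hq hpq hcond
    rw [Fin.lt_def, πval, πval]
    rcases hcond with h | h
    · rw [ftop p (by omega) (by omega), ftop q hq h]
      have := hAmono p q (le_of_lt hpq)
      omega
    · rw [fbot p (by omega) h, fbot q hq (by omega)]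
      have := hcanti (p - (k+1)) (q - (k+1)) (by omega)
      have := hcle (p - (k+1))
      have := hc1 (q - (k+1)) (by omega)
      omega
  refine ⟨π, ?_, ?_, ?_⟩
  · -- indecomposable
    intro K hK0 hKn hall
    by_cases hKk : K ≤ k + 1
    · have h1 := hall ⟨K - 1, by omega⟩ (by simp only [Fin.val_mk]; omega)
      rw [πval] at h1
      have h3 : ((f ⟨K - 1, by omega⟩ : Fin n) : ℕ) = (K - 1) + A (K - 1) :=
        ftop (K-1) (by omega) (by omega)
      have := hA1 (K - 1)
      omega
    · have h1 := hall ⟨k, by omega⟩ (by simp only [Fin.val_mk]; omega)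
      rw [πval] at h1
      have h3 : ((f ⟨k, by omega⟩ : Fin n) : ℕ) = k + A k := ftop k (by omega) le_rfl
      omega
  · -- exactly one descent
    refine ⟨⟨k, by omega⟩, ⟨⟨k + 1, by omega⟩, by simp, ?_⟩, ?_⟩
    · rw [Fin.lt_def, πval, πval]
      rw [ftop k (by omega) le_rfl, fbot (k+1) (by omega) (by omega)]
      rw [hAk]
      have h0 : k + 1 - (k + 1) = 0 := by omega
      rw [h0, hc0']
      omega
    · rintro y ⟨b', hb', hlt⟩
      have hyv := y.isLt
      have hbv := b'.isLt
      ext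
      simp only [Fin.val_mk]
      by_contra hne
      rcases lt_or_gt_of_ne hne with h | h
      · have h2 := srun (y : ℕ) (b' : ℕ) hbv (by omega) (Or.inl (by omega))
        rw [Fin.eta, Fin.eta] at h2
        exact absurd hlt (asymm h2)
      · have h2 := srun (y : ℕ) (b' : ℕ) hbv (by omega) (Or.inr (by omega))
        rw [Fin.eta, Fin.eta] at h2
        exact absurd hlt (asymm h2)
  · -- the isomorphism
    obtain ⟨isoPB⟩ := iso_perm_bipartite hn π srun
    have hEeq : bipartiteGraph k m E = bipartiteGraph k m
        (fun r s => π ⟨k + 1 + s, by have := s.isLt; omega⟩ < π ⟨k - r, by omega⟩) := by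
      apply bipartiteGraph_congr
      intro r s
      have hrk := r.isLt
      have hsm := s.isLt
      rw [Fin.lt_def, πval, πval, ftop (k - (r : ℕ)) (by omega) (by omega),
        fbot (k + 1 + (s : ℕ)) (by omega) (by omega)]
      have hse : k + 1 + (s : ℕ) - (k+1) = (s : ℕ) := by omega
      rw [hse]
      rw [hDmem, hcmem]
      constructor
      · intro h
        exact M1 (k - (r : ℕ)) (by omega) s (by omega) (by omega)
      · intro h
        by_contra hcon
        have := M2 (k - (r : ℕ)) (by omega) s (by omega) (by omega)
        omega
    rw [hEeq] at iso
    exact ⟨iso.trans isoPB⟩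

/-- a graph `G` on `n` vertices is a Ferrers graph if and only if there
is an indecomposable permutation `π` of `[n]` with exactly one descent such that `G`
is isomorphic to the permutation graph `G_π`. -/
theorem ferrersGraph_iff_permGraph_one_descent {n : ℕ} (G : SimpleGraph (Fin n)) :
    IsFerrersGraph G ↔
      ∃ π : Equiv.Perm (Fin n), IsIndecomposable π ∧ HasExactlyOneDescent π ∧
        Nonempty (G ≃g permGraph π) := by
  constructor
  · exact fun h => ferrers_to_perm G h
  · rintro ⟨π, h1, h2, h3⟩
    exact perm_to_ferrers G π h1 h2 h3
end
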